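/- arXiv:2106.09773 — 5 statements merged into one kernel-verified Lean document; each statement's English description precedes it below -/
import Mathlib

section
/- For every nonnegative integer L and every positive integer k, ∑_{j=-L}^{L} χ(j+1) q^{k j(j-1)} [2L choose L-j]_q = q^L ∑_{j=-L}^{L} χ(j+1) q^{k j^2 - (k-1) j} [2L choose L-j]_q, where χ(m) is the Jacobi symbol (m/3) (i.e. χ(m)=1 if m≡1 mod 3, χ(m)=-1 if m≡2 mod 3, χ(m)=0 if m≡0 mod 3). -/
open Finset

/-- The Gaussian (q-)binomial coefficient `[n choose k]_q` for `k : ℤ`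
(equal to `0` when `k < 0` or `k > n`). -/
def qbinom {R : Type*} [CommRing R] (q : R) : ℕ → ℤ → R
  | 0, k => if k = 0 then 1 else 0
  | n + 1, k => qbinom q n (k - 1) + q ^ k.toNat * qbinom q n k

/-- The Jacobi symbol `(m/3)`. -/
def chi (m : ℤ) : ℤ := if m % 3 = 1 then 1 else if m % 3 = 2 then -1 else 0


section aux
variable {R : Type*} [CommRing R] (q : R)

lemma qbinom_zero (m : ℤ) : qbinom q 0 m = if m = 0 then 1 else 0 := rfl

lemma qbinom_succ (n : ℕ) (m : ℤ) :
    qbinom q (n+1) m = qbinom q n (m - 1) + q ^ m.toNat * qbinom q n m := rfl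

lemma qbinom_neg (n : ℕ) : ∀ m : ℤ, m < 0 → qbinom q n m = 0 := by
  induction n with
  | zero => intro m h; simp [qbinom_zero, h.ne]
  | succ n ih =>
    intro m h
    rw [qbinom_succ, ih (m-1) (by omega), ih m h]
    ring

lemma qbinom_gt (n : ℕ) : ∀ m : ℤ, (n : ℤ) < m → qbinom q n m = 0 := by
  induction n with
  | zero => intro m h; rw [qbinom_zero, if_neg (by omega)]
  | succ n ih =>
    intro m h
    push_cast at h
    rw [qbinom_succ, ih (m-1) (by omega), ih m (by omega)]
    ring

lemma qbinom_dual (n : ℕ) : ∀ m : ℤ,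
    qbinom q (n+1) m = q ^ ((n:ℤ)+1-m).toNat * qbinom q n (m-1) + qbinom q n m := by
  induction n with
  | zero =>
    intro m
    rcases eq_or_ne m 0 with h | h
    · subst h; simp [qbinom_succ, qbinom_zero]
    rcases eq_or_ne m 1 with h1 | h1
    · subst h1; simp [qbinom_succ, qbinom_zero]
    · simp [qbinom_succ, qbinom_zero, h, h1, sub_eq_zero]
  | succ n ih =>
    intro m
    rw [qbinom_succ q (n+1) m]
    have he : ((n:ℤ)+1-(m-1)).toNat = ((n:ℤ)+1+1-m).toNat := by omega
    have E2 := ih (m-1)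
    rw [he, show ((m:ℤ)-1-1) = m - 2 by ring] at E2
    have E3 := ih m
    have E4 : qbinom q (n+1) (m-1)
        = qbinom q n (m-2) + q ^ (m-1).toNat * qbinom q n (m-1) := by
      rw [qbinom_succ, show ((m:ℤ)-1-1) = m - 2 by ring]
    have E5 : qbinom q (n+1) m
        = qbinom q n (m-1) + q ^ m.toNat * qbinom q n m := qbinom_succ q n m
    have hcast : ((n:ℤ)+1+1-m).toNat = ((((n:ℕ)+1 : ℕ):ℤ)+1-m).toNat := by push_cast; ring_nf
    have key : q ^ m.toNat * (q ^ ((n:ℤ)+1-m).toNat * qbinom q n (m-1))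
        = q ^ ((n:ℤ)+1+1-m).toNat * (q ^ (m-1).toNat * qbinom q n (m-1)) := by
      by_cases hm : 1 ≤ m ∧ m ≤ (n:ℤ) + 1
      · rw [← mul_assoc, ← mul_assoc, ← pow_add, ← pow_add]
        congr 2
        omega
      · rcases (by omega : m - 1 < 0 ∨ (n:ℤ) < m - 1) with h | h
        · rw [qbinom_neg q n _ h]; ring
        · rw [qbinom_gt q n _ h]; ring
    rw [← hcast]
    linear_combination E2 + q ^ m.toNat * E3 - q ^ ((n:ℤ)+1+1-m).toNat * E4 - E5 + key

lemma qbinom_symm (n : ℕ) : ∀ m : ℤ, qbinom q n m = qbinom q n ((n : ℤ) - m) := by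
  induction n with
  | zero =>
    intro m
    rw [qbinom_zero, qbinom_zero]
    by_cases h : m = 0
    · simp [h]
    · rw [if_neg h, if_neg (by omega)]
  | succ n ih =>
    intro m
    rw [show ((((n:ℕ)+1:ℕ)):ℤ) - m = (n:ℤ)+1-m by push_cast; ring]
    rw [qbinom_succ q n m, qbinom_dual q n ((n:ℤ)+1-m), ih (m-1), ih m]
    have h1 : ((n:ℤ)) - (m-1) = (n:ℤ)+1-m := by ring
    have h2 : ((n:ℤ)+1-m-1 : ℤ) = (n:ℤ)-m := by ring
    have h3 : ((n:ℤ)+1-((n:ℤ)+1-m)).toNat = m.toNat := by omega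
    rw [h1, h2, h3]
    ring

lemma qbinom_absorb (n : ℕ) (m : ℤ) :
    (1 - q ^ ((n:ℤ) - m).toNat) * qbinom q n m
      = (1 - q ^ (m+1).toNat) * qbinom q n (m+1) := by
  have h1 := qbinom_succ q n (m+1)
  have h2 := qbinom_dual q n (m+1)
  rw [h1, show m + 1 - 1 = m by ring,
    show ((n:ℤ)+1-(m+1)).toNat = ((n:ℤ)-m).toNat by omega] at h2
  linear_combination h2

end aux

lemma chi_pair (j : ℤ) : chi (1 - j + 1) = - chi (j + 1) := by
  unfold chi
  rcases (show (j+1) % 3 = 0 ∨ (j+1) % 3 = 1 ∨ (j+1) % 3 = 2 by omega) with h | h | h <;>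
    rw [h] <;>
    first
      | (rw [show (1 - j + 1) % 3 = 0 by omega]; norm_num)
      | (rw [show (1 - j + 1) % 3 = 2 by omega]; norm_num)
      | (rw [show (1 - j + 1) % 3 = 1 by omega]; norm_num)

lemma key_sum {F : Type*} [Field F] (q : F) (k : ℤ) (L : ℕ) :
    ∑ j ∈ Icc (-(L:ℤ)) ((L:ℤ)+1),
      (chi (j+1) : F) * q ^ (k*j*(j-1)) * ((1 - q ^ ((L:ℤ)+j).toNat) * qbinom q (2*L) ((L:ℤ)-j))
      = 0 := by
  apply Finset.sum_involution (fun j _ => 1 - j)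
  · intro j hj
    have hchi : (chi (1 - j + 1) : F) = - (chi (j + 1) : F) := by
      rw [chi_pair]; push_cast; ring
    have hexp : k * (1 - j) * (1 - j - 1) = k * j * (j - 1) := by ring
    have hb : (1 - q ^ ((L:ℤ)+(1-j)).toNat) * qbinom q (2*L) ((L:ℤ)-(1-j))
        = (1 - q ^ ((L:ℤ)+j).toNat) * qbinom q (2*L) ((L:ℤ)-j) := by
      have hsym : qbinom q (2*L) ((L:ℤ)-(1-j)) = qbinom q (2*L) (((L:ℤ)-j)+1) := by
        rw [qbinom_symm q (2*L) ((L:ℤ)-(1-j))]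
        congr 1
        push_cast
        ring
      rw [hsym]
      have habs := qbinom_absorb q (2*L) ((L:ℤ)-j)
      rw [show (((2*L:ℕ):ℤ) - ((L:ℤ)-j)).toNat = ((L:ℤ)+j).toNat by push_cast; omega,
        show ((L:ℤ)-j+1).toNat = ((L:ℤ)+(1-j)).toNat by omega] at habs
      exact habs.symm
    rw [hchi, hexp, hb]
    ring
  · intro j hj hne
    omega
  · intro j hj
    first
      | (simp only [mem_Icc] at hj ⊢; omega)
      | omega
  · intro j hj
    first
      | (simp only [mem_Icc] at hj ⊢; omega)
      | omega

lemma key_sum2 {F : Type*} [Field F] (q : F) (k : ℤ) (L : ℕ) :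
    ∑ j ∈ Icc (-(L:ℤ)) ((L:ℤ)),
      (chi (j+1) : F) * q ^ (k*j*(j-1)) * ((1 - q ^ ((L:ℤ)+j).toNat) * qbinom q (2*L) ((L:ℤ)-j))
      = 0 := by
  have h := key_sum q k L
  have hins : Icc (-(L:ℤ)) ((L:ℤ)+1) = insert ((L:ℤ)+1) (Icc (-(L:ℤ)) (L:ℤ)) := by
    ext x
    simp only [mem_Icc, mem_insert]
    omega
  rw [hins, Finset.sum_insert (by simp only [mem_Icc]; omega)] at h
  rw [qbinom_neg q (2*L) ((L:ℤ)-((L:ℤ)+1)) (by omega)] at h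
  simpa using h

theorem stmt3 (L k : ℕ) (hk : 1 ≤ k) :
    ∑ j ∈ Icc (-(L : ℤ)) (L : ℤ),
        (chi (j + 1) : RatFunc ℚ) * (RatFunc.X : RatFunc ℚ) ^ ((k : ℤ) * j * (j - 1))
          * qbinom (RatFunc.X : RatFunc ℚ) (2 * L) ((L : ℤ) - j)
      = (RatFunc.X : RatFunc ℚ) ^ L *
        ∑ j ∈ Icc (-(L : ℤ)) (L : ℤ),
          (chi (j + 1) : RatFunc ℚ) * (RatFunc.X : RatFunc ℚ) ^ ((k : ℤ) * j ^ 2 - ((k : ℤ) - 1) * j)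
            * qbinom (RatFunc.X : RatFunc ℚ) (2 * L) ((L : ℤ) - j) := by

  have hq : (RatFunc.X : RatFunc ℚ) ≠ 0 := RatFunc.X_ne_zero
  rw [Finset.mul_sum, ← sub_eq_zero, ← Finset.sum_sub_distrib]
  rw [← key_sum2 (RatFunc.X : RatFunc ℚ) (k:ℤ) L]
  apply Finset.sum_congr rfl
  intro j hj
  simp only [mem_Icc] at hj
  have e2 : (RatFunc.X : RatFunc ℚ) ^ ((L:ℤ)) *
        (RatFunc.X : RatFunc ℚ) ^ ((k : ℤ) * j ^ 2 - ((k : ℤ) - 1) * j)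
      = (RatFunc.X : RatFunc ℚ) ^ ((k : ℤ) * j * (j - 1)) *
        (RatFunc.X : RatFunc ℚ) ^ (((L:ℤ)+j).toNat) := by
    rw [← zpow_natCast (RatFunc.X : RatFunc ℚ) ((L:ℤ)+j).toNat, ← zpow_add₀ hq, ← zpow_add₀ hq]
    congr 1
    rw [Int.toNat_of_nonneg (by omega : (0:ℤ) ≤ (L:ℤ)+j)]
    ring
  have e1 : (RatFunc.X : RatFunc ℚ) ^ (L:ℕ)
      = (RatFunc.X : RatFunc ℚ) ^ ((L:ℤ)) := (zpow_natCast _ _).symm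
  rw [show (RatFunc.X : RatFunc ℚ) ^ L *
        ((chi (j + 1) : RatFunc ℚ) * (RatFunc.X : RatFunc ℚ) ^ ((k : ℤ) * j ^ 2 - ((k : ℤ) - 1) * j)
          * qbinom (RatFunc.X : RatFunc ℚ) (2 * L) ((L : ℤ) - j))
      = (chi (j + 1) : RatFunc ℚ) *
        ((RatFunc.X : RatFunc ℚ) ^ ((L:ℤ)) *
          (RatFunc.X : RatFunc ℚ) ^ ((k : ℤ) * j ^ 2 - ((k : ℤ) - 1) * j)) *
        qbinom (RatFunc.X : RatFunc ℚ) (2 * L) ((L : ℤ) - j) by rw [← e1]; ring, e2]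
  ring
end

section
/- Let b_L := ∑_{j=-L}^{L} χ(j+1) q^{j(j+1)} [2L choose L-j]_q, where χ(m) is the Jacobi symbol (m/3). Then for all L ≥ 2, b_L = (1 + q - q^{2L}) b_{L-1} - q (1 - q^{2L-1})(1 - q^{2L-2}) b_{L-2}. -/
open Finset

lemma chi_add3 (m : ℤ) : chi (m+3) = chi m := by unfold chi; split_ifs <;> omega
lemma chi_neg' (m : ℤ) : chi (-m) = - chi m := by unfold chi; split_ifs <;> omega
lemma chi_three (m : ℤ) : chi m + chi (m+1) + chi (m+2) = 0 := by
  unfold chi; split_ifs <;> omega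

noncomputable def qq : RatFunc ℚ := RatFunc.X
lemma hqq : qq ≠ 0 := RatFunc.X_ne_zero

lemma qb_neg : ∀ (n : ℕ) {k : ℤ}, k < 0 → qbinom qq n k = 0 := by
  intro n
  induction n with
  | zero => intro k hk; simp [qbinom]; omega
  | succ n ih => intro k hk; simp only [qbinom]; rw [ih (by omega), ih hk]; ring

lemma qb_gt : ∀ (n : ℕ) {k : ℤ}, (n:ℤ) < k → qbinom qq n k = 0 := by
  intro n
  induction n with
  | zero => intro k hk; simp [qbinom]; omega
  | succ n ih =>
      intro k hk
      push_cast at hk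
      simp only [qbinom]
      rw [ih (by omega), ih (by omega)]; ring

lemma pascal1 (n : ℕ) (k : ℤ) :
    qbinom qq (n+1) k = qbinom qq n (k-1) + qq ^ k * qbinom qq n k := by
  rcases le_or_gt 0 k with h | h
  · show qbinom qq n (k-1) + qq ^ k.toNat * qbinom qq n k = _
    rw [← zpow_natCast qq k.toNat, Int.toNat_of_nonneg h]
  · rw [qb_neg n (by omega), qb_neg n h, qb_neg (n+1) h]; ring

lemma pascal2 (n : ℕ) (k : ℤ) :
    qbinom qq (n+1) k = qq ^ ((n:ℤ)+1-k) * qbinom qq n (k-1) + qbinom qq n k := by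
  induction n generalizing k with
  | zero =>
      rw [pascal1]
      rcases eq_or_ne k 1 with rfl | h1
      · norm_num [qbinom]
      · rcases eq_or_ne k 0 with rfl | h0
        · norm_num [qbinom]
        · have e1 : qbinom qq 0 (k-1) = 0 := by simp [qbinom]; omega
          have e2 : qbinom qq 0 k = 0 := by simp [qbinom]; omega
          rw [e1, e2]; ring
  | succ n ih =>
      rw [pascal1 (n+1) k]
      conv_lhs => rw [ih (k-1), ih k]
      conv_rhs => rw [pascal1 n (k-1), pascal1 n k]
      have h1 : qq^k * qq^((n:ℤ)+1-k) = qq^((n:ℤ)+1) := by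
        rw [← zpow_add₀ hqq]; ring_nf
      have h3 : qq^((n:ℤ)+1+1-k) * qq^(k-1) = qq^((n:ℤ)+1) := by
        rw [← zpow_add₀ hqq]; ring_nf
      have h4 : ((n:ℤ))+1-(k-1) = (n:ℤ)+1+1-k := by ring
      rw [h4]
      push_cast
      linear_combination (h1 - h3) * qbinom qq n (k-1)

lemma qb_symm (n : ℕ) (k : ℤ) : qbinom qq n k = qbinom qq n ((n:ℤ) - k) := by
  induction n generalizing k with
  | zero => simp [qbinom]
  | succ n ih =>
      push_cast
      rw [pascal1 n k, pascal2 n ((n:ℤ)+1-k)]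
      have e1 : (n:ℤ)+1-((n:ℤ)+1-k) = k := by ring
      have e2 : (n:ℤ)+1-k-1 = (n:ℤ)-k := by ring
      rw [e1, e2, ih k, ih (k-1)]
      have e3 : (n:ℤ)-(k-1) = (n:ℤ)+1-k := by ring
      rw [e3]
      ring

lemma pascal11 (n : ℕ) (k : ℤ) :
    qbinom qq (n+2) k = qbinom qq n (k-2)
      + (qq^(k-1) + qq^k) * qbinom qq n (k-1) + qq^(2*k) * qbinom qq n k := by
  rw [show n+2 = (n+1)+1 from rfl, pascal1 (n+1) k, pascal1 n (k-1), pascal1 n k]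
  have h : qq^k * qq^k = qq^(2*k) := by rw [← zpow_add₀ hqq]; ring_nf
  rw [show k-1-1 = k-2 by ring]
  linear_combination h * qbinom qq n k

lemma pascal12 (n : ℕ) (k : ℤ) :
    qbinom qq (n+2) k = qq^((n:ℤ)+2-k) * qbinom qq n (k-2)
      + (1 + qq^k) * qbinom qq n (k-1) + qq^(2*k) * qbinom qq n k := by
  rw [show n+2 = (n+1)+1 from rfl, pascal1 (n+1) k, pascal2 n (k-1), pascal1 n k]
  have h : qq^k * qq^k = qq^(2*k) := by rw [← zpow_add₀ hqq]; ring_nf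
  rw [show k-1-1 = k-2 by ring, show (n:ℤ)+1-(k-1) = (n:ℤ)+2-k by ring]
  linear_combination h * qbinom qq n k

lemma sum_shift (f : ℤ → RatFunc ℚ) (a b s : ℤ) :
    ∑ j ∈ Icc (a+s) (b+s), f j = ∑ j ∈ Icc a b, f (j+s) := by
  rw [← Finset.map_add_right_Icc a b s, Finset.sum_map]
  rfl

lemma sum_reflect (f : ℤ → RatFunc ℚ) (b : ℤ) :
    ∑ j ∈ Icc (-b) b, f j = ∑ j ∈ Icc (-b) b, f (-j) := by
  refine Finset.sum_nbij' (i := fun j => -j) (j := fun j => -j) ?_ ?_ ?_ ?_ ?_ <;>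
    intros <;> simp_all [Finset.mem_Icc] <;> omega

lemma sum_ext (a b a' b' : ℤ) (f : ℤ → RatFunc ℚ) (h1 : a' ≤ a) (h2 : b ≤ b')
    (h0 : ∀ j, j < a ∨ b < j → f j = 0) :
    ∑ j ∈ Icc a' b', f j = ∑ j ∈ Icc a b, f j := by
  refine (Finset.sum_subset (Finset.Icc_subset_Icc h1 h2) ?_).symm
  intro x hx hnx
  simp only [Finset.mem_Icc] at hx hnx
  exact h0 x (by omega)

noncomputable def Phi (c t : ℤ) (M : ℕ) : RatFunc ℚ :=
  ∑ j ∈ Icc (-(M:ℤ)-2) ((M:ℤ)+2),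
    (chi (j+c) : RatFunc ℚ) * qq ^ (j*j + t*j) * qbinom qq (2*M) ((M:ℤ) - j)

lemma term_vanish (M : ℕ) (c t : ℤ) : ∀ j : ℤ, j < -(M:ℤ) ∨ (M:ℤ) < j →
    (chi (j+c) : RatFunc ℚ) * qq ^ (j*j + t*j) * qbinom qq (2*M) ((M:ℤ) - j) = 0 := by
  intro j hj
  rcases hj with h | h
  · rw [qb_gt (2*M) (by push_cast; omega)]; ring
  · rw [qb_neg (2*M) (by omega)]; ring

lemma Phi_window (c t : ℤ) (M : ℕ) (a b : ℤ) (h1 : a ≤ -(M:ℤ)-2) (h2 : (M:ℤ)+2 ≤ b) :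
    ∑ j ∈ Icc a b,
      (chi (j+c) : RatFunc ℚ) * qq ^ (j*j + t*j) * qbinom qq (2*M) ((M:ℤ) - j)
    = Phi c t M := by
  unfold Phi
  refine sum_ext _ _ _ _ _ (by omega) (by omega) (fun j hj => term_vanish M c t j (by omega))

lemma Phi_two (t : ℤ) (M : ℕ) : Phi 2 t M = -Phi 0 t M - Phi 1 t M := by
  unfold Phi
  rw [← Finset.sum_neg_distrib, ← Finset.sum_sub_distrib]
  refine Finset.sum_congr rfl (fun j hj => ?_)
  simp only [add_zero]
  have h := chi_three j
  have h2 : ((chi (j+2) : ℤ) : RatFunc ℚ) = -((chi j : ℤ) : RatFunc ℚ) - ((chi (j+1) : ℤ) : RatFunc ℚ) := by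
    have h3 : chi (j+2) = -chi j - chi (j+1) := by omega
    rw [h3]; push_cast; ring
  rw [h2]; ring

lemma Phi_reflect (c t : ℤ) (M : ℕ) :
    Phi c t M = - ∑ j ∈ Icc (-(M:ℤ)-2) ((M:ℤ)+2),
      (chi (j-c) : RatFunc ℚ) * qq ^ (j*j - t*j) * qbinom qq (2*M) ((M:ℤ) - j) := by
  unfold Phi
  rw [show -(M:ℤ)-2 = -((M:ℤ)+2) by ring, sum_reflect]
  rw [← Finset.sum_neg_distrib]
  refine Finset.sum_congr rfl (fun j hj => ?_)
  have e1 : ((chi (-j+c) : ℤ) : RatFunc ℚ) = -((chi (j-c) : ℤ) : RatFunc ℚ) := by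
    have : chi (-j+c) = - chi (j-c) := by
      rw [show -j+c = -(j-c) by ring, chi_neg']
    rw [this]; push_cast; ring
  have e2 : (-j)*(-j) + t*(-j) = j*j - t*j := by ring
  have e3 : qbinom qq (2*M) ((M:ℤ) - -j) = qbinom qq (2*M) ((M:ℤ) - j) := by
    rw [qb_symm (2*M) ((M:ℤ) - -j)]
    congr 1
    push_cast
    ring
  rw [e1, e2, e3]
  ring

lemma symA (t : ℤ) (M : ℕ) : Phi 0 t M = - Phi 0 (-t) M := by
  rw [Phi_reflect 0 t M]
  congr 1
  unfold Phi
  refine Finset.sum_congr rfl (fun j hj => ?_)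
  rw [show j - 0 = j + 0 by ring, show j*j - t*j = j*j + (-t)*j by ring]

lemma symB (t : ℤ) (M : ℕ) : Phi 1 t M = Phi 0 (-t) M + Phi 1 (-t) M := by
  rw [Phi_reflect 1 t M]
  have e : ∑ j ∈ Icc (-(M:ℤ)-2) ((M:ℤ)+2),
      (chi (j-1) : RatFunc ℚ) * qq ^ (j*j - t*j) * qbinom qq (2*M) ((M:ℤ) - j)
      = Phi 2 (-t) M := by
    unfold Phi
    refine Finset.sum_congr rfl (fun j hj => ?_)
    rw [show (j:ℤ) - 1 = (j+2) - 3 by ring]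
    rw [show chi (j+2-3) = chi (j+2) from by rw [← chi_add3 (j+2-3)]; norm_num]
    rw [show j*j - t*j = j*j + (-t)*j by ring]
  rw [e, Phi_two]
  ring

instance : CharZero (RatFunc ℚ) :=
  charZero_of_injective_algebraMap (RingHom.injective (algebraMap ℚ (RatFunc ℚ)))

lemma Phi00 (M : ℕ) : Phi 0 0 M = 0 := by
  have h := symA 0 M
  norm_num at h
  have h2 : (2 : RatFunc ℚ) * Phi 0 0 M = 0 := by linear_combination h
  exact (mul_eq_zero.mp h2).resolve_left two_ne_zero

lemma sum_to_Phi (c t u s : ℤ) (N : ℕ) (hs1 : -1 ≤ s) (hs2 : s ≤ 1) :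
    ∑ j ∈ Icc (-(N:ℤ)-3) ((N:ℤ)+3),
      (chi (j+c) : RatFunc ℚ) * qq ^ (j*j + t*j + u) * qbinom qq (2*N) ((N:ℤ)+s-j)
    = qq^(s*s + t*s + u) * Phi (c+s) (t+2*s) N := by
  have e0 : Icc (-(N:ℤ)-3) ((N:ℤ)+3) = Icc ((-(N:ℤ)-3-s)+s) (((N:ℤ)+3-s)+s) := by
    congr 1 <;> ring
  rw [e0, sum_shift]
  have h1 : ∀ j ∈ Icc (-(N:ℤ)-3-s) ((N:ℤ)+3-s),
      (chi ((j+s)+c) : RatFunc ℚ) * qq ^ ((j+s)*(j+s) + t*(j+s) + u)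
        * qbinom qq (2*N) ((N:ℤ)+s-(j+s))
      = qq^(s*s+t*s+u) * ((chi (j+(c+s)) : RatFunc ℚ) * qq ^ (j*j + (t+2*s)*j)
          * qbinom qq (2*N) ((N:ℤ)-j)) := by
    intro j _
    rw [show (j+s)+c = j+(c+s) by ring, show (N:ℤ)+s-(j+s) = (N:ℤ)-j by ring,
        show (j+s)*(j+s) + t*(j+s) + u = (j*j + (t+2*s)*j) + (s*s+t*s+u) by ring,
        zpow_add₀ hqq]
    ring
  rw [Finset.sum_congr rfl h1, ← Finset.mul_sum]
  rw [Phi_window (c+s) (t+2*s) N _ _ (by omega) (by omega)]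

lemma Phi_mone (t : ℤ) (M : ℕ) : Phi (-1) t M = Phi 2 t M := by
  unfold Phi
  refine Finset.sum_congr rfl (fun j hj => ?_)
  rw [show j + (2:ℤ) = (j + -1) + 3 by ring, chi_add3]

lemma Phi_succ_sum (c t : ℤ) (N : ℕ) :
    Phi c t (N+1) = ∑ j ∈ Icc (-(N:ℤ)-3) ((N:ℤ)+3),
      (chi (j+c) : RatFunc ℚ) * qq ^ (j*j + t*j) * qbinom qq (2*N+2) ((N:ℤ)+1-j) := by
  unfold Phi
  rw [show 2*(N+1) = 2*N+2 by ring]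
  push_cast
  rw [show -((N:ℤ)+1)-2 = -(N:ℤ)-3 by ring, show ((N:ℤ)+1)+2 = (N:ℤ)+3 by ring]

lemma symA' (M : ℕ) : Phi 0 (-1) M = -Phi 0 1 M := by
  have h := symA (-1) M; norm_num at h; exact h

lemma symB' (M : ℕ) : Phi 1 (-1) M = Phi 0 1 M + Phi 1 1 M := by
  have h := symB (-1) M; norm_num at h; exact h

lemma recIII (N : ℕ) : Phi 1 1 (N+1) = -(1 + qq^(2*(N:ℤ)+2)) * Phi 0 1 N
    + (qq^((N:ℤ)) + qq^((N:ℤ)+1)) * Phi 1 0 N - qq^(2*(N:ℤ)+2) * Phi 1 1 N := by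
  rw [Phi_succ_sum]
  have hterm : ∀ j ∈ Icc (-(N:ℤ)-3) ((N:ℤ)+3),
      (chi (j+1) : RatFunc ℚ) * qq^(j*j+1*j) * qbinom qq (2*N+2) ((N:ℤ)+1-j)
      = (chi (j+1) : RatFunc ℚ) * qq^(j*j+1*j+0) * qbinom qq (2*N) ((N:ℤ)+(-1)-j)
        + ((chi (j+1) : RatFunc ℚ) * qq^(j*j+0*j+(N:ℤ)) * qbinom qq (2*N) ((N:ℤ)+0-j)
          + (chi (j+1) : RatFunc ℚ) * qq^(j*j+0*j+((N:ℤ)+1)) * qbinom qq (2*N) ((N:ℤ)+0-j))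
        + (chi (j+1) : RatFunc ℚ) * qq^(j*j+(-1)*j+(2*(N:ℤ)+2)) * qbinom qq (2*N) ((N:ℤ)+1-j) := by
    intro j _
    rw [pascal11 (2*N) ((N:ℤ)+1-j)]
    rw [show (N:ℤ)+1-j-2 = (N:ℤ)+(-1)-j by ring, show (N:ℤ)+1-j-1 = (N:ℤ)+0-j by ring]
    have e1 : qq^(j*j+1*j) * qq^((N:ℤ)+0-j) = qq^(j*j+0*j+(N:ℤ)) := by
      rw [← zpow_add₀ hqq]; congr 1; ring
    have e2 : qq^(j*j+1*j) * qq^((N:ℤ)+1-j) = qq^(j*j+0*j+((N:ℤ)+1)) := by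
      rw [← zpow_add₀ hqq]; congr 1; ring
    have e3 : qq^(j*j+1*j) * qq^(2*((N:ℤ)+1-j)) = qq^(j*j+(-1)*j+(2*(N:ℤ)+2)) := by
      rw [← zpow_add₀ hqq]; congr 1; ring
    have e4 : qq^(j*j+1*j+0) = qq^(j*j+1*j) := by congr 1; ring
    rw [← e1, ← e2, ← e3, e4]
    have e5 : qq^((N:ℤ)+0-j) = qq^((N:ℤ)+1-j-1) := by congr 1; ring
    rw [e5]
    ring
  rw [Finset.sum_congr rfl hterm, Finset.sum_add_distrib, Finset.sum_add_distrib,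
      Finset.sum_add_distrib]
  rw [sum_to_Phi 1 1 0 (-1) N (by norm_num) (by norm_num),
      sum_to_Phi 1 0 ((N:ℤ)) 0 N (by norm_num) (by norm_num),
      sum_to_Phi 1 0 ((N:ℤ)+1) 0 N (by norm_num) (by norm_num),
      sum_to_Phi 1 (-1) (2*(N:ℤ)+2) 1 N (by norm_num) (by norm_num)]
  norm_num
  rw [Phi_two, symA']
  ring

lemma recI (N : ℕ) : Phi 0 1 (N+1) = -(1 - qq^(2*(N:ℤ)+2)) * Phi 1 1 N := by
  rw [Phi_succ_sum]
  have hterm : ∀ j ∈ Icc (-(N:ℤ)-3) ((N:ℤ)+3),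
      (chi (j+0) : RatFunc ℚ) * qq^(j*j+1*j) * qbinom qq (2*N+2) ((N:ℤ)+1-j)
      = (chi (j+0) : RatFunc ℚ) * qq^(j*j+1*j+0) * qbinom qq (2*N) ((N:ℤ)+(-1)-j)
        + ((chi (j+0) : RatFunc ℚ) * qq^(j*j+0*j+(N:ℤ)) * qbinom qq (2*N) ((N:ℤ)+0-j)
          + (chi (j+0) : RatFunc ℚ) * qq^(j*j+0*j+((N:ℤ)+1)) * qbinom qq (2*N) ((N:ℤ)+0-j))
        + (chi (j+0) : RatFunc ℚ) * qq^(j*j+(-1)*j+(2*(N:ℤ)+2)) * qbinom qq (2*N) ((N:ℤ)+1-j) := by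
    intro j _
    rw [pascal11 (2*N) ((N:ℤ)+1-j)]
    rw [show (N:ℤ)+1-j-2 = (N:ℤ)+(-1)-j by ring, show (N:ℤ)+1-j-1 = (N:ℤ)+0-j by ring]
    have e1 : qq^(j*j+1*j) * qq^((N:ℤ)+0-j) = qq^(j*j+0*j+(N:ℤ)) := by
      rw [← zpow_add₀ hqq]; congr 1; ring
    have e2 : qq^(j*j+1*j) * qq^((N:ℤ)+1-j) = qq^(j*j+0*j+((N:ℤ)+1)) := by
      rw [← zpow_add₀ hqq]; congr 1; ring
    have e3 : qq^(j*j+1*j) * qq^(2*((N:ℤ)+1-j)) = qq^(j*j+(-1)*j+(2*(N:ℤ)+2)) := by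
      rw [← zpow_add₀ hqq]; congr 1; ring
    have e4 : qq^(j*j+1*j+0) = qq^(j*j+1*j) := by congr 1; ring
    rw [← e1, ← e2, ← e3, e4]
    have e5 : qq^((N:ℤ)+0-j) = qq^((N:ℤ)+1-j-1) := by congr 1; ring
    rw [e5]
    ring
  rw [Finset.sum_congr rfl hterm, Finset.sum_add_distrib, Finset.sum_add_distrib,
      Finset.sum_add_distrib]
  rw [sum_to_Phi 0 1 0 (-1) N (by norm_num) (by norm_num),
      sum_to_Phi 0 0 ((N:ℤ)) 0 N (by norm_num) (by norm_num),
      sum_to_Phi 0 0 ((N:ℤ)+1) 0 N (by norm_num) (by norm_num),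
      sum_to_Phi 0 (-1) (2*(N:ℤ)+2) 1 N (by norm_num) (by norm_num)]
  norm_num
  rw [Phi_mone, Phi_two, symA', symB', Phi00]
  ring

lemma recII (N : ℕ) : Phi 1 0 (N+1) = (1 - qq^(2*(N:ℤ)+1)) * Phi 1 0 N
    + qq^((N:ℤ)+1) * Phi 1 1 N := by
  rw [Phi_succ_sum]
  have hterm : ∀ j ∈ Icc (-(N:ℤ)-3) ((N:ℤ)+3),
      (chi (j+1) : RatFunc ℚ) * qq^(j*j+0*j) * qbinom qq (2*N+2) ((N:ℤ)+1-j)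
      = (chi (j+1) : RatFunc ℚ) * qq^(j*j+1*j+((N:ℤ)+1)) * qbinom qq (2*N) ((N:ℤ)+(-1)-j)
        + ((chi (j+1) : RatFunc ℚ) * qq^(j*j+0*j+0) * qbinom qq (2*N) ((N:ℤ)+0-j)
          + (chi (j+1) : RatFunc ℚ) * qq^(j*j+(-1)*j+((N:ℤ)+1)) * qbinom qq (2*N) ((N:ℤ)+0-j))
        + (chi (j+1) : RatFunc ℚ) * qq^(j*j+(-2)*j+(2*(N:ℤ)+2)) * qbinom qq (2*N) ((N:ℤ)+1-j) := by
    intro j _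
    rw [pascal12 (2*N) ((N:ℤ)+1-j)]
    push_cast
    rw [show (N:ℤ)+1-j-2 = (N:ℤ)+(-1)-j by ring, show (N:ℤ)+1-j-1 = (N:ℤ)+0-j by ring]
    have e1 : qq^(j*j+0*j) * qq^(2*(N:ℤ)+2-((N:ℤ)+1-j)) = qq^(j*j+1*j+((N:ℤ)+1)) := by
      rw [← zpow_add₀ hqq]; congr 1; ring
    have e2 : qq^(j*j+0*j) * qq^((N:ℤ)+1-j) = qq^(j*j+(-1)*j+((N:ℤ)+1)) := by
      rw [← zpow_add₀ hqq]; congr 1; ring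
    have e3 : qq^(j*j+0*j) * qq^(2*((N:ℤ)+1-j)) = qq^(j*j+(-2)*j+(2*(N:ℤ)+2)) := by
      rw [← zpow_add₀ hqq]; congr 1; ring
    have e4 : qq^(j*j+0*j+0) = qq^(j*j+0*j) := by congr 1; ring
    rw [← e1, ← e2, ← e3, e4]
    ring
  rw [Finset.sum_congr rfl hterm, Finset.sum_add_distrib, Finset.sum_add_distrib,
      Finset.sum_add_distrib]
  rw [sum_to_Phi 1 1 ((N:ℤ)+1) (-1) N (by norm_num) (by norm_num),
      sum_to_Phi 1 0 0 0 N (by norm_num) (by norm_num),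
      sum_to_Phi 1 (-1) ((N:ℤ)+1) 0 N (by norm_num) (by norm_num),
      sum_to_Phi 1 (-2) (2*(N:ℤ)+2) 1 N (by norm_num) (by norm_num)]
  norm_num
  rw [Phi_two, symA', symB', Phi00]
  ring

lemma ivlem : ∀ N : ℕ, qq^((N:ℤ)+1) * Phi 1 0 (N+1)
    = Phi 1 1 (N+1) - (1 - qq^(2*(N:ℤ)+2)) * Phi 1 1 N := by
  intro N
  induction N with
  | zero =>
      norm_num
      unfold Phi
      norm_num
      rw [show (Icc (-3:ℤ) 3) = ({-3,-2,-1,0,1,2,3} : Finset ℤ) by decide,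
          show (Icc (-2:ℤ) 2) = ({-2,-1,0,1,2} : Finset ℤ) by decide]
      norm_num [Finset.sum_insert, Finset.mem_insert, qbinom, chi]
      ring
  | succ N ih =>
      push_cast
      rw [recII (N+1), recIII (N+1), recI N]
      push_cast
      have h3 : qq^(2*((N:ℤ)+1)+1) = qq^(1:ℤ)*qq^(1:ℤ)*qq^(1:ℤ)*(qq^((N:ℤ))*qq^((N:ℤ))) := by
        rw [← zpow_add₀ hqq, ← zpow_add₀ hqq, ← zpow_add₀ hqq, ← zpow_add₀ hqq]; congr 1; ring
      have h4 : qq^(2*((N:ℤ)+1)+2) = qq^(1:ℤ)*qq^(1:ℤ)*qq^(1:ℤ)*qq^(1:ℤ)*(qq^((N:ℤ))*qq^((N:ℤ))) := by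
        rw [← zpow_add₀ hqq, ← zpow_add₀ hqq, ← zpow_add₀ hqq, ← zpow_add₀ hqq, ← zpow_add₀ hqq]
        congr 1; ring
      have h5 : qq^((N:ℤ)+1+1) = qq^(1:ℤ)*qq^(1:ℤ)*qq^((N:ℤ)) := by
        rw [← zpow_add₀ hqq, ← zpow_add₀ hqq]; congr 1; ring
      have h2 : qq^(2*(N:ℤ)+2) = qq^(1:ℤ)*qq^(1:ℤ)*(qq^((N:ℤ))*qq^((N:ℤ))) := by
        rw [← zpow_add₀ hqq, ← zpow_add₀ hqq, ← zpow_add₀ hqq]; congr 1; ring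
      have hy : qq^((N:ℤ)+1) = qq^(1:ℤ)*qq^((N:ℤ)) := by
        rw [← zpow_add₀ hqq]; congr 1; ring
      rw [h2, hy] at ih
      rw [h3, h4, h5, h2, hy]
      linear_combination (-(1 + qq^(1:ℤ)*qq^(1:ℤ)*(qq^(1:ℤ)*qq^((N:ℤ)))*(qq^(1:ℤ)*qq^((N:ℤ))))) * ih

theorem stmt9 (b : ℕ → RatFunc ℚ)
    (hb : ∀ L : ℕ, b L = ∑ j ∈ Icc (-(L : ℤ)) (L : ℤ),
      (chi (j + 1) : RatFunc ℚ) * (RatFunc.X : RatFunc ℚ) ^ (j * (j + 1))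
        * qbinom (RatFunc.X : RatFunc ℚ) (2 * L) ((L : ℤ) - j))
    (L : ℕ) (hL : 2 ≤ L) :
    b L = (1 + RatFunc.X - (RatFunc.X : RatFunc ℚ) ^ (2 * L)) * b (L - 1)
      - RatFunc.X * (1 - (RatFunc.X : RatFunc ℚ) ^ (2 * L - 1))
        * (1 - (RatFunc.X : RatFunc ℚ) ^ (2 * L - 2)) * b (L - 2) := by
  have hbP : ∀ n : ℕ, b n = Phi 1 1 n := by
    intro n
    rw [hb n]
    have e : Phi 1 1 n = ∑ j ∈ Icc (-(n:ℤ)) (n:ℤ),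
        (chi (j+1) : RatFunc ℚ) * qq^(j*j+1*j) * qbinom qq (2*n) ((n:ℤ)-j) := by
      unfold Phi
      exact sum_ext _ _ _ _ _ (by omega) (by omega) (fun j hj => term_vanish n 1 1 j (by omega))
    rw [e]
    refine Finset.sum_congr rfl (fun j hj => ?_)
    rw [show j*(j+1) = j*j+1*j by ring]
    rfl
  obtain ⟨W, rfl⟩ : ∃ W, L = W + 2 := ⟨L - 2, by omega⟩
  rw [show W+2-1 = W+1 from rfl, show W+2-2 = W from rfl]
  rw [hbP, hbP, hbP]
  have ep1 : (RatFunc.X : RatFunc ℚ) ^ (2*(W+2)) = qq^(2*(W:ℤ)+4) := by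
    rw [show qq^(2*(W:ℤ)+4) = qq^(((2*W+4 : ℕ)):ℤ) from by push_cast; ring_nf, zpow_natCast]
    show RatFunc.X ^ (2*(W+2)) = RatFunc.X ^ (2*W+4)
    congr 1
  have ep2 : (RatFunc.X : RatFunc ℚ) ^ (2*(W+2)-1) = qq^(2*(W:ℤ)+3) := by
    rw [show qq^(2*(W:ℤ)+3) = qq^(((2*W+3 : ℕ)):ℤ) from by push_cast; ring_nf, zpow_natCast]
    show RatFunc.X ^ (2*(W+2)-1) = RatFunc.X ^ (2*W+3)
    congr 1
  have ep3 : (RatFunc.X : RatFunc ℚ) ^ (2*(W+2)-2) = qq^(2*(W:ℤ)+2) := by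
    rw [show qq^(2*(W:ℤ)+2) = qq^(((2*W+2 : ℕ)):ℤ) from by push_cast; ring_nf, zpow_natCast]
    show RatFunc.X ^ (2*(W+2)-2) = RatFunc.X ^ (2*W+2)
    congr 1
  rw [ep1, ep2, ep3]
  have hX : (RatFunc.X : RatFunc ℚ) = qq := rfl
  rw [hX]
  have hIII := recIII (W+1)
  push_cast at hIII
  have hI := recI W
  have hiv := ivlem W
  rw [show W+1+1 = W+2 from rfl] at hIII
  rw [hIII, hI]
  -- express all powers in atoms qq^(1:ℤ) and qq^(W:ℤ)
  have g1 : qq^(2*(W:ℤ)+4) = qq^(1:ℤ)*qq^(1:ℤ)*qq^(1:ℤ)*qq^(1:ℤ)*(qq^((W:ℤ))*qq^((W:ℤ))) := by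
    rw [← zpow_add₀ hqq, ← zpow_add₀ hqq, ← zpow_add₀ hqq, ← zpow_add₀ hqq, ← zpow_add₀ hqq]
    congr 1; ring
  have g2 : qq^(2*(W:ℤ)+3) = qq^(1:ℤ)*qq^(1:ℤ)*qq^(1:ℤ)*(qq^((W:ℤ))*qq^((W:ℤ))) := by
    rw [← zpow_add₀ hqq, ← zpow_add₀ hqq, ← zpow_add₀ hqq, ← zpow_add₀ hqq]; congr 1; ring
  have g3 : qq^(2*(W:ℤ)+2) = qq^(1:ℤ)*qq^(1:ℤ)*(qq^((W:ℤ))*qq^((W:ℤ))) := by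
    rw [← zpow_add₀ hqq, ← zpow_add₀ hqq, ← zpow_add₀ hqq]; congr 1; ring
  have g4 : qq^(2*((W:ℤ)+1)+2) = qq^(1:ℤ)*qq^(1:ℤ)*qq^(1:ℤ)*qq^(1:ℤ)*(qq^((W:ℤ))*qq^((W:ℤ))) := by
    rw [← zpow_add₀ hqq, ← zpow_add₀ hqq, ← zpow_add₀ hqq, ← zpow_add₀ hqq, ← zpow_add₀ hqq]
    congr 1; ring
  have g5 : qq^((W:ℤ)+1+1) = qq^(1:ℤ)*qq^(1:ℤ)*qq^((W:ℤ)) := by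
    rw [← zpow_add₀ hqq, ← zpow_add₀ hqq]; congr 1; ring
  have g6 : qq^((W:ℤ)+1) = qq^(1:ℤ)*qq^((W:ℤ)) := by
    rw [← zpow_add₀ hqq]; congr 1; ring
  have g7 : qq = qq^(1:ℤ) := (zpow_one qq).symm
  rw [g3, g6] at hiv
  rw [g1, g2, g3, g4, g5, g6]
  rw [show (qq : RatFunc ℚ) * (1 - qq^(1:ℤ)*qq^(1:ℤ)*qq^(1:ℤ)*(qq^((W:ℤ))*qq^((W:ℤ)))) *
      (1 - qq^(1:ℤ)*qq^(1:ℤ)*(qq^((W:ℤ))*qq^((W:ℤ))))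
      = qq^(1:ℤ) * (1 - qq^(1:ℤ)*qq^(1:ℤ)*qq^(1:ℤ)*(qq^((W:ℤ))*qq^((W:ℤ)))) *
      (1 - qq^(1:ℤ)*qq^(1:ℤ)*(qq^((W:ℤ))*qq^((W:ℤ)))) from by rw [← g7]]
  rw [show (1 : RatFunc ℚ) + qq - qq^(1:ℤ)*qq^(1:ℤ)*qq^(1:ℤ)*qq^(1:ℤ)*(qq^((W:ℤ))*qq^((W:ℤ)))
      = 1 + qq^(1:ℤ) - qq^(1:ℤ)*qq^(1:ℤ)*qq^(1:ℤ)*qq^(1:ℤ)*(qq^((W:ℤ))*qq^((W:ℤ))) from by rw [← g7]]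
  linear_combination (1 + qq^(1:ℤ)) * hiv
end

section
/- As formal power series in q: ((q;q)_∞ / (q³;q³)_∞) · ∑_{m≥0} (-1)^{m+1} q^{3m(3m+1)/2} / (q;q)_{3m+1} = ∑_{k≥0} χ(k+2) q^k / (q;q)_k, where χ(m) is the Jacobi symbol (m/3). -/
open Finset PowerSeries

/-- The finite q-Pochhammer symbol `(q^M; q^M)_n = ∏_{i=1}^n (1 - q^{M i})`
as a formal power series in `q`. -/
noncomputable def pochP (M n : ℕ) : PowerSeries ℚ :=
  ∏ i ∈ Finset.range n, (1 - (X : PowerSeries ℚ) ^ (M * (i + 1)))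

/-- The infinite product `(q^M; q^M)_∞ = ∏_{i≥1} (1 - q^{M i})` as a formal power
series: its degree-`d` coefficient is the (stable) degree-`d` coefficient of the
partial products. -/
noncomputable def pochInf (M : ℕ) : PowerSeries ℚ :=
  PowerSeries.mk fun d => coeff d (pochP M (d + 1))

namespace Aux12

noncomputable def w : ℂ := ⟨-1/2, Real.sqrt 3 / 2⟩

lemma w_rel : w ^ 2 + w + 1 = 0 := by
  have h3 : Real.sqrt 3 ^ 2 = 3 := Real.sq_sqrt (by norm_num)
  apply Complex.ext <;>
    simp [w, pow_two, Complex.add_re, Complex.add_im, Complex.mul_re, Complex.mul_im] <;>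
    nlinarith [h3]

lemma w_cube : w ^ 3 = 1 := by
  have h := w_rel
  have h2 : (w - 1) * (w ^ 2 + w + 1) = w ^ 3 - 1 := by ring
  rw [h, mul_zero] at h2
  have h3 := h2.symm
  rw [sub_eq_zero] at h3
  exact h3

end Aux12


namespace Aux12

/-- triangular numbers: tri n = n(n-1)/2 -/
def tri : ℕ → ℕ
  | 0 => 0
  | n + 1 => tri n + n

lemma tri_ge (n : ℕ) : n ≤ tri n + 1 := by
  induction n with
  | zero => simp
  | succ k ih => simp only [tri]; omega

lemma two_tri (n : ℕ) : 2 * tri n = n * (n - 1) := by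
  induction n with
  | zero => simp [tri]
  | succ k ih =>
    simp only [tri, Nat.add_sub_cancel]
    have h1 : 2 * (tri k + k) = 2 * tri k + 2 * k := by ring
    rw [h1, ih]
    cases k with
    | zero => simp
    | succ j => simp only [Nat.add_sub_cancel]; ring

lemma tri_eq (m : ℕ) : 3 * m * (3 * m + 1) / 2 = tri (3 * m + 1) := by
  have h := two_tri (3 * m + 1)
  have hA : (3 * m + 1) * (3 * m + 1 - 1) = 3 * m * (3 * m + 1) := by
    simp only [Nat.add_sub_cancel]; ring
  rw [hA] at h
  omega

noncomputable def pk (n : ℕ) : PowerSeries ℂ := ∏ i ∈ range n, (1 - (X : PowerSeries ℂ) ^ (i + 1))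

noncomputable def pk3 (n : ℕ) : PowerSeries ℂ :=
  ∏ i ∈ range n, (1 - (X : PowerSeries ℂ) ^ (3 * (i + 1)))

noncomputable def pz (z : ℂ) (n : ℕ) : PowerSeries ℂ :=
  ∏ i ∈ range n, (1 - C z * (X : PowerSeries ℂ) ^ (i + 1))

lemma pz_one (n : ℕ) : pz 1 n = pk n := by simp [pz, pk]

lemma pk_succ (n : ℕ) : pk (n + 1) = pk n * (1 - X ^ (n + 1)) := prod_range_succ _ _

lemma constC_X_pow_term (z : ℂ) (e : ℕ) (he : 1 ≤ e) :
    constantCoeff (1 - C z * X ^ e) = 1 := by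
  obtain ⟨f, rfl⟩ := Nat.exists_eq_add_of_le he
  simp [pow_add, map_sub, map_mul, map_pow, constantCoeff_X]

lemma pk_const (n : ℕ) : constantCoeff (pk n) = 1 := by
  unfold pk
  rw [map_prod]
  apply prod_eq_one
  intro i _
  have := constC_X_pow_term 1 (i + 1) (by omega)
  simpa using this

lemma pz_const (z : ℂ) (n : ℕ) : constantCoeff (pz z n) = 1 := by
  unfold pz
  rw [map_prod]
  exact prod_eq_one fun i _ => constC_X_pow_term z (i + 1) (by omega)

lemma pk3_const (n : ℕ) : constantCoeff (pk3 n) = 1 := by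
  unfold pk3
  rw [map_prod]
  apply prod_eq_one
  intro i _
  have := constC_X_pow_term 1 (3 * (i + 1)) (by omega)
  simpa using this

lemma pk_mul_inv (n : ℕ) : pk n * (pk n)⁻¹ = 1 :=
  PowerSeries.mul_inv_cancel _ (by rw [pk_const]; norm_num)

lemma pk_inv_succ (n : ℕ) : (pk n)⁻¹ = (1 - X ^ (n + 1)) * (pk (n + 1))⁻¹ := by
  rw [PowerSeries.inv_eq_iff_mul_eq_one (by rw [pk_const]; norm_num)]
  calc (1 - X ^ (n + 1)) * (pk (n + 1))⁻¹ * pk n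
      = pk (n + 1) * (pk (n + 1))⁻¹ := by rw [pk_succ]; ring
    _ = 1 := PowerSeries.mul_inv_cancel _ (by rw [pk_const]; norm_num)

lemma pk_zero_inv : (pk 0)⁻¹ = 1 := by
  have : pk 0 = 1 := by simp [pk]
  rw [this, inv_one]

/-- generic vanishing: low coefficient of a term with a high power of X -/
lemma coeff_vanish {d e : ℕ} (h : d < e) (a : ℂ) (g : PowerSeries ℂ) :
    coeff d (C a * (X ^ e * g)) = 0 := by
  rw [coeff_C_mul, coeff_X_pow_mul' g e d, if_neg (by omega), mul_zero]

/-- `CE d f g` : the coefficients of `f` and `g` agree up to degree `d`. -/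
def CE (d : ℕ) (f g : PowerSeries ℂ) : Prop := ∀ e, e ≤ d → coeff e f = coeff e g

lemma CE.refl (d : ℕ) (f : PowerSeries ℂ) : CE d f f := fun _ _ => rfl

lemma CE.symm {d f g} (h : CE d f g) : CE d g f := fun e he => (h e he).symm

lemma CE.trans {d f g h'} (h1 : CE d f g) (h2 : CE d g h') : CE d f h' :=
  fun e he => (h1 e he).trans (h2 e he)

lemma CE.of_eq {d : ℕ} {f g} (h : f = g) : CE d f g := fun _ _ => by rw [h]

lemma CE.add {d f g f' g'} (h1 : CE d f g) (h2 : CE d f' g') : CE d (f + f') (g + g') :=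
  fun e he => by rw [map_add, map_add, h1 e he, h2 e he]

lemma CE.mul {d f g f' g'} (h1 : CE d f g) (h2 : CE d f' g') : CE d (f * f') (g * g') := by
  intro e he
  rw [coeff_mul, coeff_mul]
  apply Finset.sum_congr rfl
  intro p hp
  rw [HasAntidiagonal.mem_antidiagonal] at hp
  rw [h1 p.1 (by omega), h2 p.2 (by omega)]

end Aux12

namespace Aux12

noncomputable def Pinf (z : ℂ) : PowerSeries ℂ := PowerSeries.mk fun d => coeff d (pz z (d + 1))

noncomputable def P3inf : PowerSeries ℂ := PowerSeries.mk fun d => coeff d (pk3 (d + 1))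

/-- Euler term `z^k q^{jk}/(q;q)_k` -/
noncomputable def ut (z : ℂ) (j k : ℕ) : PowerSeries ℂ :=
  C (z ^ k) * ((X : PowerSeries ℂ) ^ (j * k) * (pk k)⁻¹)

/-- theta term `(-z)^n q^{tri n + jn}/(q;q)_n` -/
noncomputable def tt (z : ℂ) (j n : ℕ) : PowerSeries ℂ :=
  C ((-z) ^ n) * ((X : PowerSeries ℂ) ^ (tri n + j * n) * (pk n)⁻¹)

noncomputable def eu (z : ℂ) (j N : ℕ) : PowerSeries ℂ := ∑ k ∈ range N, ut z j k

noncomputable def th (z : ℂ) (j N : ℕ) : PowerSeries ℂ := ∑ n ∈ range N, tt z j n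

noncomputable def Eu (z : ℂ) (j : ℕ) : PowerSeries ℂ :=
  PowerSeries.mk fun d => coeff d (eu z j (d + 1))

noncomputable def Th (z : ℂ) (j : ℕ) : PowerSeries ℂ :=
  PowerSeries.mk fun d => coeff d (th z j (d + 2))

/-- coefficient of a truncated sum is unchanged by extending the truncation,
provided all the extra terms have high order. -/
lemma coeff_sum_ext {t : ℕ → PowerSeries ℂ} {d N M : ℕ} (hNM : N ≤ M)
    (h : ∀ k, N ≤ k → coeff d (t k) = 0) :
    coeff d (∑ k ∈ range M, t k) = coeff d (∑ k ∈ range N, t k) := by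
  rw [map_sum, map_sum]
  symm
  apply Finset.sum_subset (range_subset_range.mpr hNM)
  intro k hk hk'
  rw [mem_range] at hk
  rw [mem_range, not_lt] at hk'
  exact h k hk'

lemma ut_vanish {z : ℂ} {j k d : ℕ} (hj : 1 ≤ j) (hk : d < k) : coeff d (ut z j k) = 0 :=
  coeff_vanish (by calc d < k := hk
                      _ ≤ j * k := Nat.le_mul_of_pos_left k hj) _ _

lemma tt_vanish {z : ℂ} {j n d : ℕ} (hn : d + 2 ≤ n) : coeff d (tt z j n) = 0 := by
  apply coeff_vanish _ _ _
  have := tri_ge n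
  omega

/-- stability of eu coefficients (j ≥ 1) -/
lemma eu_stab {z : ℂ} {j e N M : ℕ} (hj : 1 ≤ j) (hN : e < N) (hM : e < M) :
    coeff e (eu z j N) = coeff e (eu z j M) := by
  unfold eu
  rcases le_total N M with h | h
  · exact (coeff_sum_ext h fun k hk => ut_vanish hj (by omega)).symm
  · exact coeff_sum_ext h fun k hk => ut_vanish hj (by omega)

lemma th_stab {z : ℂ} {j e N M : ℕ} (hN : e + 2 ≤ N) (hM : e + 2 ≤ M) :
    coeff e (th z j N) = coeff e (th z j M) := by
  unfold th
  rcases le_total N M with h | h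
  · exact (coeff_sum_ext h fun n hn => tt_vanish (by omega)).symm
  · exact coeff_sum_ext h fun n hn => tt_vanish (by omega)

/-- stability of pz coefficients -/
lemma pz_stab {z : ℂ} {e N M : ℕ} (hN : e < N) (hM : e < M) :
    coeff e (pz z N) = coeff e (pz z M) := by
  have key : ∀ n m : ℕ, n ≤ m → e < n → coeff e (pz z m) = coeff e (pz z n) := by
    intro n m hnm hen
    induction m, hnm using Nat.le_induction with
    | base => rfl
    | succ m hm ih =>
      rw [← ih]
      unfold pz
      rw [prod_range_succ]
      have expand : (∏ i ∈ range m, (1 - C z * (X:PowerSeries ℂ) ^ (i+1))) *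
          (1 - C z * X ^ (m+1)) =
          (∏ i ∈ range m, (1 - C z * (X:PowerSeries ℂ) ^ (i+1))) -
          C z * (X ^ (m+1) * ∏ i ∈ range m, (1 - C z * (X:PowerSeries ℂ) ^ (i+1))) := by
        ring
      rw [expand, map_sub, coeff_vanish (by omega) _ _, sub_zero]
  rcases le_total N M with h | h
  · exact (key N M h hN).symm
  · exact key M N h hM

lemma pk3_stab {e N M : ℕ} (hN : e < N) (hM : e < M) :
    coeff e (pk3 N) = coeff e (pk3 M) := by
  have key : ∀ n m : ℕ, n ≤ m → e < n → coeff e (pk3 m) = coeff e (pk3 n) := by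
    intro n m hnm hen
    induction m, hnm using Nat.le_induction with
    | base => rfl
    | succ m hm ih =>
      rw [← ih]
      unfold pk3
      rw [prod_range_succ]
      have expand : (∏ i ∈ range m, (1 - (X:PowerSeries ℂ) ^ (3*(i+1)))) *
          (1 - X ^ (3*(m+1))) =
          (∏ i ∈ range m, (1 - (X:PowerSeries ℂ) ^ (3*(i+1)))) -
          C 1 * (X ^ (3*(m+1)) * ∏ i ∈ range m, (1 - (X:PowerSeries ℂ) ^ (3*(i+1)))) := by
        simp only [map_one, one_mul]; ring
      rw [expand, map_sub, coeff_vanish (by omega) _ _, sub_zero]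
  rcases le_total N M with h | h
  · exact (key N M h hN).symm
  · exact key M N h hM

/-- CE between the mk-series and its partials -/
lemma CE_Pinf {z : ℂ} {d N : ℕ} (hN : d < N) : CE d (Pinf z) (pz z N) := by
  intro e he
  rw [Pinf, coeff_mk]
  exact pz_stab (by omega) (by omega)

lemma CE_P3inf {d N : ℕ} (hN : d < N) : CE d P3inf (pk3 N) := by
  intro e he
  rw [P3inf, coeff_mk]
  exact pk3_stab (by omega) (by omega)

lemma CE_Eu {z : ℂ} {j d N : ℕ} (hj : 1 ≤ j) (hN : d < N) : CE d (Eu z j) (eu z j N) := by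
  intro e he
  rw [Eu, coeff_mk]
  exact eu_stab hj (by omega) (by omega)

lemma CE_Th {z : ℂ} {j d N : ℕ} (hN : d + 2 ≤ N) : CE d (Th z j) (th z j N) := by
  intro e he
  rw [Th, coeff_mk]
  exact th_stab (by omega) (by omega)

end Aux12

namespace Aux12

lemma ut_zero (z : ℂ) (j : ℕ) : ut z j 0 = 1 := by
  simp [ut, pk_zero_inv]

lemma tt_zero (z : ℂ) (j : ℕ) : tt z j 0 = 1 := by
  simp [tt, tri, pk_zero_inv]

lemma ut_step (z : ℂ) (j k : ℕ) :
    ut z j (k + 1) - (C z * X ^ j) * ut z j k = ut z (j + 1) (k + 1) := by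
  unfold ut
  rw [pk_inv_succ k, pow_succ z k, map_mul,
    show (j + 1) * (k + 1) = j * k + (j + (k + 1)) from by ring,
    show j * (k + 1) = j * k + j from by ring, pow_add, pow_add, pow_add]
  ring

lemma tt_step (z : ℂ) (j n : ℕ) :
    tt z (j + 1) (n + 1) - (C z * X ^ j) * tt z (j + 1) n = tt z j (n + 1) := by
  unfold tt
  rw [pk_inv_succ n, pow_succ (-z) n, map_mul, map_neg,
    show tri (n + 1) + (j + 1) * (n + 1) = (tri n + j * n) + (n + (j + (n + 1))) from by
      simp only [tri]; ring,
    show tri n + (j + 1) * n = (tri n + j * n) + n from by ring,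
    show tri (n + 1) + j * (n + 1) = (tri n + j * n) + (n + j) from by
      simp only [tri]; ring,
    pow_add, pow_add, pow_add, pow_add, pow_add]
  ring

lemma eu_rec (z : ℂ) (j N : ℕ) :
    eu z (j + 1) (N + 1) = eu z j (N + 1) - (C z * X ^ j) * eu z j N := by
  unfold eu
  rw [sum_range_succ' (fun k => ut z (j + 1) k) N, sum_range_succ' (fun k => ut z j k) N,
    mul_sum]
  simp only [ut_zero]
  have hc : ∀ k ∈ range N, ut z (j + 1) (k + 1) = ut z j (k + 1) - (C z * X ^ j) * ut z j k :=
    fun k _ => (ut_step z j k).symm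
  rw [sum_congr rfl hc, Finset.sum_sub_distrib]
  ring

lemma th_rec (z : ℂ) (j N : ℕ) :
    th z j (N + 1) = th z (j + 1) (N + 1) - (C z * X ^ j) * th z (j + 1) N := by
  unfold th
  rw [sum_range_succ' (fun n => tt z j n) N, sum_range_succ' (fun n => tt z (j + 1) n) N,
    mul_sum]
  simp only [tt_zero]
  have hc : ∀ n ∈ range N, tt z j (n + 1) = tt z (j + 1) (n + 1) - (C z * X ^ j) * tt z (j + 1) n :=
    fun n _ => (tt_step z j n).symm
  rw [sum_congr rfl hc, Finset.sum_sub_distrib]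
  ring

end Aux12

namespace Aux12

lemma eu_rec' (z : ℂ) (j N : ℕ) :
    (1 - C z * X ^ j) * eu z j (N + 1) = eu z (j + 1) (N + 1) - (C z * X ^ j) * ut z j N := by
  have h1 := eu_rec z j N
  have h2 : eu z j (N + 1) = eu z j N + ut z j N := sum_range_succ _ _
  linear_combination (-1 : PowerSeries ℂ) * h1 - (C z * X ^ j) * h2

lemma th_rec' (z : ℂ) (j N : ℕ) :
    (1 - C z * X ^ j) * th z (j + 1) (N + 1) = th z j (N + 1) - (C z * X ^ j) * tt z (j + 1) N := by
  have h1 := th_rec z j N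
  have h2 : th z (j + 1) (N + 1) = th z (j + 1) N + tt z (j + 1) N := sum_range_succ _ _
  linear_combination (-1 : PowerSeries ℂ) * h1 - (C z * X ^ j) * h2

lemma boundary_ut_vanish {z : ℂ} {j N d : ℕ} (hj : 1 ≤ j) (hN : d < N) {e : ℕ} (he : e ≤ d) :
    coeff e ((C z * X ^ j) * ut z j N) = 0 := by
  have hrw : (C z * X ^ j) * ut z j N = C (z * z ^ N) * (X ^ (j + j * N) * (pk N)⁻¹) := by
    unfold ut
    rw [map_mul, pow_add]
    ring
  rw [hrw]
  apply coeff_vanish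
  have : N ≤ j * N := Nat.le_mul_of_pos_left N hj
  omega

lemma boundary_tt_vanish {z : ℂ} {j N d : ℕ} (hN : d < N) {e : ℕ} (he : e ≤ d) :
    coeff e ((C z * X ^ j) * tt z (j + 1) N) = 0 := by
  have hrw : (C z * X ^ j) * tt z (j + 1) N
      = C (z * (-z) ^ N) * (X ^ (j + (tri N + (j + 1) * N)) * (pk N)⁻¹) := by
    unfold tt
    rw [map_mul, pow_add]
    ring
  rw [hrw]
  apply coeff_vanish
  have : N ≤ (j + 1) * N := Nat.le_mul_of_pos_left N (by omega)
  omega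

lemma CE_eu_step {z : ℂ} {j d N : ℕ} (hj : 1 ≤ j) (hN : d < N) :
    CE d ((1 - C z * X ^ j) * eu z j (N + 1)) (eu z (j + 1) (N + 1)) := by
  intro e he
  rw [eu_rec', map_sub, boundary_ut_vanish hj hN he, sub_zero]

lemma CE_th_step {z : ℂ} {j d N : ℕ} (hN : d < N) :
    CE d (th z j (N + 1)) ((1 - C z * X ^ j) * th z (j + 1) (N + 1)) := by
  intro e he
  rw [th_rec', map_sub, boundary_tt_vanish hN he, sub_zero]

lemma CE_eu_one {z : ℂ} {J N d : ℕ} (hJ : d + 1 ≤ J) (hN : 1 ≤ N) : CE d (eu z J N) 1 := by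
  intro e he
  unfold eu
  rw [map_sum, Finset.sum_eq_single_of_mem 0 (mem_range.mpr (by omega))]
  · rw [ut_zero]
  · intro k _ hk
    unfold ut
    apply coeff_vanish
    have : J ≤ J * k := Nat.le_mul_of_pos_right J (by omega)
    omega

lemma CE_th_one {z : ℂ} {J N d : ℕ} (hJ : d + 1 ≤ J) (hN : 1 ≤ N) : CE d (th z J N) 1 := by
  intro e he
  unfold th
  rw [map_sum, Finset.sum_eq_single_of_mem 0 (mem_range.mpr (by omega))]
  · rw [tt_zero]
  · intro n _ hn
    apply coeff_vanish _ _ _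
    have : n ≤ J * n := Nat.le_mul_of_pos_left n (by omega)
    have : J ≤ J * n := Nat.le_mul_of_pos_right J (by omega)
    omega

/-- Euler's identity: `(zq;q)_∞ · ∑_k z^k q^k/(q;q)_k = 1`. -/
lemma euler_id (z : ℂ) : Pinf z * Eu z 1 = 1 := by
  apply PowerSeries.ext
  intro d
  have main : ∀ J : ℕ,
      CE d ((∏ i ∈ range J, (1 - C z * (X : PowerSeries ℂ) ^ (i + 1))) * eu z 1 (d + 2))
        (eu z (J + 1) (d + 2)) := by
    intro J
    induction J with
    | zero => exact CE.of_eq (by rw [prod_range_zero, one_mul])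
    | succ J ih =>
      have h1 : (∏ i ∈ range (J + 1), (1 - C z * (X : PowerSeries ℂ) ^ (i + 1))) *
          eu z 1 (d + 2) =
          (1 - C z * X ^ (J + 1)) *
            ((∏ i ∈ range J, (1 - C z * (X : PowerSeries ℂ) ^ (i + 1))) * eu z 1 (d + 2)) := by
        rw [prod_range_succ]; ring
      refine (CE.of_eq h1).trans (((CE.refl d _).mul ih).trans ?_)
      have := CE_eu_step (z := z) (j := J + 1) (d := d) (N := d + 1) (by omega) (by omega)
      exact this
  have h2 : CE d (Pinf z * Eu z 1) ((∏ i ∈ range (d + 1),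
      (1 - C z * (X : PowerSeries ℂ) ^ (i + 1))) * eu z 1 (d + 2)) :=
    (CE_Pinf (by omega)).mul (CE_Eu le_rfl (by omega))
  have h3 := (h2.trans (main (d + 1))).trans (CE_eu_one (z := z) (by omega) (by omega))
  exact h3 d le_rfl

/-- Euler's other identity: `∑_n (-z)^n q^{n(n-1)/2}/(q;q)_n = (z;q)_∞`. -/
lemma theta_id (z : ℂ) : Th z 0 = (1 - C z) * Pinf z := by
  apply PowerSeries.ext
  intro d
  have main : ∀ J : ℕ,
      CE d (th z 0 (d + 2))
        ((∏ j ∈ range J, (1 - C z * (X : PowerSeries ℂ) ^ j)) * th z J (d + 2)) := by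
    intro J
    induction J with
    | zero => exact CE.of_eq (by rw [prod_range_zero, one_mul])
    | succ J ih =>
      refine ih.trans (((CE.refl d _).mul
        (CE_th_step (z := z) (j := J) (d := d) (N := d + 1) (by omega))).trans
        (CE.of_eq (by rw [prod_range_succ]; ring)))
  have h1 := (main (d + 2)).trans (((CE.refl d _).mul
    (CE_th_one (z := z) (J := d + 2) (N := d + 2) (by omega) (by omega))).trans
    (CE.of_eq (mul_one _)))
  have h2 : (∏ j ∈ range (d + 2), (1 - C z * (X : PowerSeries ℂ) ^ j)) =
      (1 - C z) * pz z (d + 1) := by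
    rw [prod_range_succ' (fun j => (1 - C z * (X : PowerSeries ℂ) ^ j)) (d + 1)]
    rw [pow_zero, mul_one, mul_comm]
    rfl
  have h3 : CE d ((1 - C z) * pz z (d + 1)) ((1 - C z) * Pinf z) :=
    (CE.refl d _).mul (CE_Pinf (by omega)).symm
  have h4 : CE d (Th z 0) (th z 0 (d + 2)) := CE_Th le_rfl
  exact (h4.trans (h1.trans ((CE.of_eq h2).trans h3))) d le_rfl

end Aux12

namespace Aux12

lemma Cw_rel : (C w) ^ 2 + C w + 1 = 0 := by
  have := congrArg C w_rel
  simpa [map_add, map_pow, map_one] using this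

lemma Cw_cube : (C w) ^ 3 = 1 := by
  have := congrArg C w_cube
  simpa [map_pow, map_one] using this

lemma cube_factor (A : PowerSeries ℂ) :
    (1 - A) * (1 - C w * A) * (1 - C (w ^ 2) * A) = 1 - A ^ 3 := by
  rw [map_pow]
  linear_combination (A ^ 2 - A) * Cw_rel + (A ^ 2 - A ^ 3) * Cw_cube

lemma pz_triple (N : ℕ) : pz 1 N * pz w N * pz (w ^ 2) N = pk3 N := by
  unfold pz pk3
  rw [← prod_mul_distrib, ← prod_mul_distrib]
  apply prod_congr rfl
  intro i _
  rw [map_one, one_mul, show 3 * (i + 1) = (i + 1) * 3 from mul_comm _ _, pow_mul]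
  exact cube_factor _

lemma triple : Pinf 1 * Pinf w * Pinf (w ^ 2) = P3inf := by
  apply PowerSeries.ext
  intro d
  have h1 : CE d (Pinf 1 * Pinf w * Pinf (w ^ 2)) (pz 1 (d+1) * pz w (d+1) * pz (w^2) (d+1)) :=
    ((CE_Pinf (by omega)).mul (CE_Pinf (by omega))).mul (CE_Pinf (by omega))
  exact (h1.trans ((CE.of_eq (pz_triple (d+1))).trans (CE_P3inf (by omega)).symm)) d le_rfl

lemma w_pow_red (q s : ℕ) : w ^ (3 * q + s) = w ^ s := by
  rw [pow_add, pow_mul, w_cube, one_pow, one_mul]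

lemma chi_scalar (k : ℕ) :
    (3 : ℂ) * (((chi ((k : ℤ) + 2) : ℚ)) : ℂ) = (w - 1) * w ^ k + (w ^ 2 - 1) * (w ^ 2) ^ k := by
  obtain ⟨q, r, hr, rfl⟩ : ∃ q r, r < 3 ∧ k = 3 * q + r :=
    ⟨k / 3, k % 3, Nat.mod_lt _ (by norm_num), (Nat.div_add_mod k 3).symm⟩
  have hsq : (w ^ 2) ^ (3 * q + r) = (w ^ (3 * q + r)) ^ 2 := by
    rw [← pow_mul, ← pow_mul, mul_comm]
  rw [hsq, w_pow_red]
  interval_cases r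
  · have hc : chi ((↑(3 * q + 0) : ℤ) + 2) = -1 := by
      unfold chi
      have h1 : ((↑(3 * q + 0) : ℤ) + 2) % 3 = 2 := by push_cast; omega
      rw [h1]; norm_num
    rw [hc]
    push_cast
    linear_combination -w_rel
  · have hc : chi ((↑(3 * q + 1) : ℤ) + 2) = 0 := by
      unfold chi
      have h1 : ((↑(3 * q + 1) : ℤ) + 2) % 3 = 0 := by push_cast; omega
      rw [h1]; norm_num
    rw [hc]
    push_cast
    linear_combination (-w) * w_cube
  · have hc : chi ((↑(3 * q + 2) : ℤ) + 2) = 1 := by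
      unfold chi
      have h1 : ((↑(3 * q + 2) : ℤ) + 2) % 3 = 1 := by push_cast; omega
      rw [h1]; norm_num
    rw [hc]
    push_cast
    linear_combination (w - w ^ 3 - 2) * w_cube + w_rel

end Aux12

namespace Aux12

/-- the complex version of the LHS sum series -/
noncomputable def Sc : PowerSeries ℂ :=
  PowerSeries.mk fun d => coeff d (∑ m ∈ range (d + 1),
    C ((-1) ^ (m + 1)) * ((X : PowerSeries ℂ) ^ (tri (3 * m + 1)) * (pk (3 * m + 1))⁻¹))

/-- the complex version of the RHS series -/
noncomputable def Rc : PowerSeries ℂ :=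
  PowerSeries.mk fun d => coeff d (∑ k ∈ range (d + 1),
    C (((chi ((k : ℤ) + 2) : ℚ)) : ℂ) * ((X : PowerSeries ℂ) ^ k * (pk k)⁻¹))

lemma wt_red (n q r : ℕ) (h : n = 3 * q + r) :
    (1 : ℂ) + w ^ (n + 2) + w ^ (2 * n + 1) = 1 + w ^ ((r + 2) % 3) + w ^ ((2 * r + 1) % 3) := by
  subst h
  have e1 : 3 * q + r + 2 = 3 * (q + (r + 2) / 3) + (r + 2) % 3 := by omega
  have e2 : 2 * (3 * q + r) + 1 = 3 * (2 * q + (2 * r + 1) / 3) + (2 * r + 1) % 3 := by omega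
  rw [e1, e2, w_pow_red, w_pow_red]

lemma g_vanish0 {n : ℕ} (h : n % 3 = 0) : (1 : ℂ) + w ^ (n + 2) + w ^ (2 * n + 1) = 0 := by
  rw [wt_red n (n / 3) 0 (by omega)]
  norm_num
  linear_combination w_rel

lemma g_vanish2 {n : ℕ} (h : n % 3 = 2) : (1 : ℂ) + w ^ (n + 2) + w ^ (2 * n + 1) = 0 := by
  rw [wt_red n (n / 3) 2 (by omega)]
  norm_num
  linear_combination w_rel

lemma g_one {n : ℕ} (h : n % 3 = 1) : (1 : ℂ) + w ^ (n + 2) + w ^ (2 * n + 1) = 3 := by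
  rw [wt_red n (n / 3) 1 (by omega)]
  norm_num

/-- the weighted coefficient combination appearing in the trisection -/
noncomputable def g (d n : ℕ) : ℂ :=
  coeff d (tt 1 0 n) + w ^ 2 * coeff d (tt w 0 n) + w * coeff d (tt (w ^ 2) 0 n)

lemma g_form (d n : ℕ) :
    g d n = (-1) ^ n * ((1 : ℂ) + w ^ (n + 2) + w ^ (2 * n + 1))
      * coeff d ((X : PowerSeries ℂ) ^ (tri n) * (pk n)⁻¹) := by
  unfold g tt
  simp only [zero_mul, add_zero, coeff_C_mul]
  have h1 : (-(1:ℂ)) ^ n = (-1 : ℂ) ^ n := by norm_num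
  have h2 : (-w) ^ n = (-1 : ℂ) ^ n * w ^ n := neg_pow w n ▸ by rw [neg_pow]
  have h3 : (-(w^2)) ^ n = (-1 : ℂ) ^ n * (w ^ 2) ^ n := by rw [neg_pow]
  rw [h1, h2, h3]
  have h4 : w ^ (n + 2) = w ^ n * w ^ 2 := by rw [pow_add]
  have h5 : w ^ (2 * n + 1) = (w ^ 2) ^ n * w := by rw [pow_add, pow_mul, pow_one]
  rw [h4, h5]
  ring

lemma neg_one_pow_red (m : ℕ) : ((-1 : ℂ)) ^ (3 * m + 1) = (-1 : ℂ) ^ (m + 1) := by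
  rw [show 3 * m + 1 = (m + 1) + 2 * m from by ring, pow_add, pow_add, pow_mul]
  norm_num

lemma g_sum (d M : ℕ) :
    ∑ n ∈ range (3 * M + 1), g d n
      = ∑ m ∈ range M, (3 : ℂ) * coeff d
          (C ((-1) ^ (m + 1)) * ((X : PowerSeries ℂ) ^ (tri (3 * m + 1)) * (pk (3 * m + 1))⁻¹)) := by
  induction M with
  | zero =>
    rw [mul_zero, zero_add, sum_range_one, sum_range_zero, g_form, g_vanish0 (by omega)]
    ring
  | succ M ih =>
    rw [show 3 * (M + 1) + 1 = (3 * M + 1) + 1 + 1 + 1 from by ring,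
      sum_range_succ, sum_range_succ, sum_range_succ, ih, sum_range_succ]
    have hv1 : g d (3 * M + 1 + 1) = 0 := by
      rw [g_form, g_vanish2 (by omega)]; ring
    have hv2 : g d (3 * M + 1 + 1 + 1) = 0 := by
      rw [g_form, g_vanish0 (by omega)]; ring
    have hv3 : g d (3 * M + 1) = (3 : ℂ) * coeff d
        (C ((-1) ^ (M + 1)) * ((X : PowerSeries ℂ) ^ (tri (3 * M + 1)) * (pk (3 * M + 1))⁻¹)) := by
      rw [g_form, g_one (by omega), coeff_C_mul, neg_one_pow_red]
      ring
    rw [hv1, hv2, hv3]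
    ring

lemma trisect : C 3 * Sc = Th 1 0 + C (w ^ 2) * Th w 0 + C w * Th (w ^ 2) 0 := by
  apply PowerSeries.ext
  intro d
  have hth : ∀ z : ℂ, coeff d (Th z 0) = ∑ n ∈ range (3 * (d + 1) + 1), coeff d (tt z 0 n) := by
    intro z
    rw [Th, coeff_mk, th_stab (by omega) (show d + 2 ≤ 3 * (d + 1) + 1 from by omega), th, map_sum]
  rw [map_add, map_add, coeff_C_mul, coeff_C_mul, coeff_C_mul, hth, hth, hth,
    mul_sum, mul_sum, ← sum_add_distrib, ← sum_add_distrib]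
  have hg : ∑ n ∈ range (3 * (d + 1) + 1),
      (coeff d (tt 1 0 n) + w ^ 2 * coeff d (tt w 0 n) + w * coeff d (tt (w ^ 2) 0 n))
      = ∑ n ∈ range (3 * (d + 1) + 1), g d n := by
    apply sum_congr rfl; intro n _; rfl
  rw [hg, g_sum d (d + 1), Sc, coeff_mk, map_sum, mul_sum]

lemma chi_comb : C 3 * Rc = C (w - 1) * Eu w 1 + C (w ^ 2 - 1) * Eu (w ^ 2) 1 := by
  apply PowerSeries.ext
  intro d
  rw [map_add, coeff_C_mul, coeff_C_mul, coeff_C_mul, Rc, coeff_mk, Eu, coeff_mk, Eu, coeff_mk,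
    map_sum, eu, map_sum, eu, map_sum, mul_sum, mul_sum, mul_sum, ← sum_add_distrib]
  apply sum_congr rfl
  intro k _
  unfold ut
  rw [one_mul, coeff_C_mul, coeff_C_mul, coeff_C_mul]
  linear_combination (coeff d ((X : PowerSeries ℂ) ^ k * (pk k)⁻¹)) * chi_scalar k

end Aux12

namespace Aux12

lemma C3_ne : (C (3 : ℂ)) ≠ 0 := by
  intro h
  have := congrArg (constantCoeff) h
  simp at this

lemma P3inf_const : constantCoeff P3inf = 1 := by
  rw [← coeff_zero_eq_constantCoeff_apply, P3inf, coeff_mk, coeff_zero_eq_constantCoeff_apply,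
    pk3_const]

lemma h3A : C 3 * Sc = C (w ^ 2 - 1) * Pinf w + C (w - 1) * Pinf (w ^ 2) := by
  rw [trisect, theta_id, theta_id, theta_id]
  simp only [map_sub, map_one, map_pow]
  linear_combination (-(Pinf w) - Pinf (w ^ 2)) * Cw_cube

lemma main_key : Rc * P3inf = Pinf 1 * Sc := by
  apply mul_left_cancel₀ C3_ne
  have hB := chi_comb
  have hA := h3A
  have ht := triple
  have he1 := euler_id w
  have he2 := euler_id (w ^ 2)
  linear_combination P3inf * hB + (-(Pinf 1)) * hA
    + (-(C (w - 1) * Eu w 1 + C (w ^ 2 - 1) * Eu (w ^ 2) 1)) * ht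
    + (C (w - 1) * Pinf 1 * Pinf (w ^ 2)) * he1
    + (C (w ^ 2 - 1) * Pinf 1 * Pinf w) * he2

lemma main_c : Pinf 1 * P3inf⁻¹ * Sc = Rc := by
  have h1 : Pinf 1 * P3inf⁻¹ * Sc = (Pinf 1 * Sc) * P3inf⁻¹ := by ring
  rw [h1, ← main_key, mul_assoc, PowerSeries.mul_inv_cancel _ (by rw [P3inf_const]; norm_num),
    mul_one]

lemma rm_inj : Function.Injective (PowerSeries.map (algebraMap ℚ ℂ)) := by
  intro f g h
  apply PowerSeries.ext
  intro n
  have := congrArg (coeff n) h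
  rw [coeff_map, coeff_map] at this
  exact (algebraMap ℚ ℂ).injective this

lemma constQ_X_pow_term (e : ℕ) (he : 1 ≤ e) :
    constantCoeff (1 - (X : PowerSeries ℚ) ^ e) = 1 := by
  obtain ⟨f, rfl⟩ := Nat.exists_eq_add_of_le he
  simp [pow_add, map_sub, map_pow, constantCoeff_X]

lemma pochP_const (M n : ℕ) (hM : 1 ≤ M) : constantCoeff (pochP M n) = 1 := by
  unfold pochP
  rw [map_prod]
  apply prod_eq_one
  intro i _
  exact constQ_X_pow_term _ (Nat.one_le_iff_ne_zero.mpr (Nat.mul_ne_zero (by omega) (by omega)))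

lemma rm_pochP (n : ℕ) : PowerSeries.map (algebraMap ℚ ℂ) (pochP 1 n) = pk n := by
  unfold pochP pk
  rw [map_prod]
  apply prod_congr rfl
  intro i _
  rw [map_sub, map_one, map_pow, PowerSeries.map_X, one_mul]

lemma rm_pochP_inv (n : ℕ) : PowerSeries.map (algebraMap ℚ ℂ) ((pochP 1 n)⁻¹) = (pk n)⁻¹ := by
  rw [PowerSeries.eq_inv_iff_mul_eq_one (by rw [pk_const]; norm_num), ← rm_pochP n, ← map_mul]
  rw [PowerSeries.inv_mul_cancel _ (by rw [pochP_const 1 n le_rfl]; norm_num), map_one]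

lemma rm_pochInf1 : PowerSeries.map (algebraMap ℚ ℂ) (pochInf 1) = Pinf 1 := by
  apply PowerSeries.ext
  intro d
  rw [pochInf, coeff_map, coeff_mk, Pinf, coeff_mk, pz_one, ← coeff_map, rm_pochP (d + 1)]

lemma rm_pochP3 (n : ℕ) : PowerSeries.map (algebraMap ℚ ℂ) (pochP 3 n) = pk3 n := by
  unfold pochP pk3
  rw [map_prod]
  apply prod_congr rfl
  intro i _
  rw [map_sub, map_one, map_pow, PowerSeries.map_X]

lemma rm_pochInf3 : PowerSeries.map (algebraMap ℚ ℂ) (pochInf 3) = P3inf := by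
  apply PowerSeries.ext
  intro d
  rw [pochInf, coeff_map, coeff_mk, P3inf, coeff_mk, ← coeff_map, rm_pochP3 (d + 1)]

lemma rm_pochInf3_inv : PowerSeries.map (algebraMap ℚ ℂ) ((pochInf 3)⁻¹) = P3inf⁻¹ := by
  rw [PowerSeries.eq_inv_iff_mul_eq_one (by rw [P3inf_const]; norm_num), ← rm_pochInf3, ← map_mul]
  have hc : constantCoeff (pochInf 3) ≠ 0 := by
    rw [← coeff_zero_eq_constantCoeff_apply, pochInf, coeff_mk,
      coeff_zero_eq_constantCoeff_apply, pochP_const 3 1 (by norm_num)]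
    norm_num
  rw [PowerSeries.inv_mul_cancel _ hc, map_one]

lemma rm_term (a : ℚ) (e n : ℕ) :
    PowerSeries.map (algebraMap ℚ ℂ) (a • ((X : PowerSeries ℚ) ^ e * (pochP 1 n)⁻¹))
      = C ((a : ℂ)) * ((X : PowerSeries ℂ) ^ e * (pk n)⁻¹) := by
  rw [smul_eq_C_mul, map_mul, map_mul, PowerSeries.map_C, map_pow, PowerSeries.map_X,
    rm_pochP_inv n]
  norm_num [eq_ratCast (algebraMap ℚ ℂ) a]

lemma rm_S : PowerSeries.map (algebraMap ℚ ℂ) (PowerSeries.mk fun d => coeff d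
    (∑ m ∈ range (d + 1),
      ((-1 : ℚ) ^ (m + 1)) • ((X : PowerSeries ℚ) ^ (3 * m * (3 * m + 1) / 2)
        * (pochP 1 (3 * m + 1))⁻¹))) = Sc := by
  apply PowerSeries.ext
  intro d
  rw [coeff_map, coeff_mk, Sc, coeff_mk, ← coeff_map]
  congr 1
  rw [map_sum]
  apply sum_congr rfl
  intro m _
  rw [rm_term, tri_eq]
  congr 2
  push_cast
  ring

lemma rm_R : PowerSeries.map (algebraMap ℚ ℂ) (PowerSeries.mk fun d => coeff d
    (∑ k ∈ range (d + 1),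
      ((chi ((k : ℤ) + 2) : ℚ)) • ((X : PowerSeries ℚ) ^ k * (pochP 1 k)⁻¹))) = Rc := by
  apply PowerSeries.ext
  intro d
  rw [coeff_map, coeff_mk, Rc, coeff_mk, ← coeff_map]
  congr 1
  rw [map_sum]
  apply sum_congr rfl
  intro k _
  rw [rm_term]

end Aux12


/-- `((q;q)_∞/(q³;q³)_∞) ∑_{m≥0} (-1)^{m+1} q^{3m(3m+1)/2}/(q;q)_{3m+1}
    = ∑_{k≥0} χ(k+2) q^k/(q;q)_k`.  The infinite sums are encoded
coefficient-wise: the degree-`d` coefficient of each series is the (stable)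
degree-`d` coefficient of its partial sums. -/

theorem stmt12 :
    pochInf 1 * (pochInf 3)⁻¹ *
        (PowerSeries.mk fun d => coeff d
          (∑ m ∈ range (d + 1),
            ((-1 : ℚ) ^ (m + 1)) • ((X : PowerSeries ℚ) ^ (3 * m * (3 * m + 1) / 2)
              * (pochP 1 (3 * m + 1))⁻¹)))
      = PowerSeries.mk fun d => coeff d
          (∑ k ∈ range (d + 1),
            ((chi ((k : ℤ) + 2) : ℚ)) • ((X : PowerSeries ℚ) ^ k * (pochP 1 k)⁻¹)) := by
  apply Aux12.rm_inj
  rw [map_mul, map_mul, Aux12.rm_pochInf1, Aux12.rm_pochInf3_inv, Aux12.rm_S, Aux12.rm_R]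
  exact Aux12.main_c
end

section
/- As formal power series in q: ((q;q)_∞ / (q³;q³)_∞) · ∑_{m≥0} (-1)^m q^{(3m+1)(3m+2)/2} / (q;q)_{3m+2} = ∑_{k≥0} χ(k) q^k / (q;q)_k, where χ(m) is the Jacobi symbol (m/3). -/
open Finset PowerSeries

noncomputable section AuxC

def ww : ℂ := (-1 + (Real.sqrt 3 : ℂ) * Complex.I)/2

lemma hww : ww^2 + ww + 1 = 0 := by
  have hI : Complex.I^2 = -1 := Complex.I_sq
  have hs : ((Real.sqrt 3 : ℝ):ℂ)^2 = 3 := by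
    norm_cast; rw [Real.sq_sqrt]; norm_num
  unfold ww
  linear_combination (3/4 : ℂ) * hI + (Complex.I^2/4) * hs

lemma hww3 : ww^3 = 1 := by linear_combination (ww - 1) * hww

lemma hwwsq : (ww - ww^2)^2 = -3 := by
  linear_combination (ww^2 - 3*ww + 3) * hww

lemma hwwne : ww - ww^2 ≠ 0 := by
  intro h
  have h2 := hwwsq
  rw [h] at h2
  norm_num at h2

lemma ww_pow_mod (n : ℕ) : ww ^ n = ww ^ (n % 3) := by
  conv_lhs => rw [← Nat.div_add_mod n 3]
  rw [pow_add, pow_mul, hww3, one_pow, one_mul]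

/-- finite product over ℂ -/
def Pf (z : ℂ) (n : ℕ) : ℂ⟦X⟧ := ∏ i ∈ Finset.range n, (1 - C (R := ℂ) z * X ^ (i + 1))

lemma Pf_succ (z : ℂ) (n : ℕ) : Pf z (n+1) = Pf z n * (1 - C (R := ℂ) z * X ^ (n+1)) :=
  Finset.prod_range_succ _ _

lemma constPf (z : ℂ) (n : ℕ) : constantCoeff (R := ℂ) (Pf z n) = 1 := by
  rw [Pf, map_prod]
  apply Finset.prod_eq_one
  intro i _
  simp [zero_pow]

lemma Pf_mul_inv (z : ℂ) (n : ℕ) : Pf z n * (Pf z n)⁻¹ = 1 :=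
  PowerSeries.mul_inv_cancel _ (by rw [constPf]; exact one_ne_zero)

lemma Pf_inv_mul (z : ℂ) (n : ℕ) : (Pf z n)⁻¹ * Pf z n = 1 :=
  PowerSeries.inv_mul_cancel _ (by rw [constPf]; exact one_ne_zero)

/-- replace a factor up to degree d -/
lemma coeff_mul_stable {f g h : ℂ⟦X⟧} {d : ℕ}
    (hg : ∀ j, j ≤ d → coeff (R := ℂ) j g = coeff (R := ℂ) j h) :
    coeff (R := ℂ) d (f * g) = coeff (R := ℂ) d (f * h) := by
  rw [coeff_mul, coeff_mul]
  apply Finset.sum_congr rfl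
  intro p hp
  rw [Finset.HasAntidiagonal.mem_antidiagonal] at hp
  rw [hg p.2 (by omega)]

lemma coeff_mul_stable' {f g h : ℂ⟦X⟧} {d : ℕ}
    (hg : ∀ j, j ≤ d → coeff (R := ℂ) j g = coeff (R := ℂ) j h) :
    coeff (R := ℂ) d (g * f) = coeff (R := ℂ) d (h * f) := by
  rw [mul_comm g f, mul_comm h f]; exact coeff_mul_stable hg

lemma coeff_mul_zero {f g : ℂ⟦X⟧} {d : ℕ}
    (hg : ∀ j, j ≤ d → coeff (R := ℂ) j g = 0) :
    coeff (R := ℂ) d (f * g) = 0 := by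
  rw [coeff_mul]
  apply Finset.sum_eq_zero
  intro p hp
  rw [Finset.HasAntidiagonal.mem_antidiagonal] at hp
  rw [hg p.2 (by omega), mul_zero]

lemma coeff_drop {f : ℂ⟦X⟧} {d m : ℕ} (h : d < m) (z : ℂ) :
    coeff (R := ℂ) d (f * (1 - C (R := ℂ) z * X^m)) = coeff (R := ℂ) d f := by
  rw [mul_sub, mul_one, map_sub, mul_left_comm, coeff_C_mul, coeff_mul_X_pow']
  rw [if_neg (by omega)]
  ring

/-- stability for generalized products -/
lemma stab_gen (z : ℂ) (e : ℕ → ℕ) (he : ∀ i, i + 1 ≤ e i) :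
    ∀ d n, d < n → coeff (R := ℂ) d (∏ i ∈ Finset.range n, (1 - C (R := ℂ) z * X ^ (e i)))
      = coeff (R := ℂ) d (∏ i ∈ Finset.range (d+1), (1 - C (R := ℂ) z * X ^ (e i))) := by
  intro d n hn
  induction n with
  | zero => omega
  | succ m ih =>
    rcases Nat.lt_or_ge d m with hm | hm
    · rw [Finset.prod_range_succ, coeff_drop (by have := he m; omega), ih hm]
    · have : m = d := by omega
      subst this
      rfl

lemma Pf_stable (z : ℂ) (d n : ℕ) (hn : d < n) :
    coeff (R := ℂ) d (Pf z n) = coeff (R := ℂ) d (Pf z (d+1)) :=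
  stab_gen z (fun i => i + 1) (fun _ => le_rfl) d n hn

/-- infinite product -/
def Pinf (z : ℂ) : ℂ⟦X⟧ := PowerSeries.mk fun d => coeff (R := ℂ) d (Pf z (d+1))

lemma Pinf_coeff (z : ℂ) (d n : ℕ) (hn : d < n) :
    coeff (R := ℂ) d (Pinf z) = coeff (R := ℂ) d (Pf z n) := by
  rw [Pinf, coeff_mk, Pf_stable z d n hn]

lemma constPinf (z : ℂ) : constantCoeff (R := ℂ) (Pinf z) = 1 := by
  rw [← coeff_zero_eq_constantCoeff, Pinf_coeff z 0 1 one_pos,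
    coeff_zero_eq_constantCoeff, constPf]

/-- limit framework -/
def Lim (A : ℕ → ℂ⟦X⟧) (f : ℂ⟦X⟧) : Prop :=
  ∀ d n, d + 3 ≤ n → coeff (R := ℂ) d (A n) = coeff (R := ℂ) d f

lemma Lim.unique {A : ℕ → ℂ⟦X⟧} {f g : ℂ⟦X⟧} (h1 : Lim A f) (h2 : Lim A g) : f = g := by
  ext d
  rw [← h1 d (d+3) le_rfl, h2 d (d+3) le_rfl]

lemma Lim.mul {A B : ℕ → ℂ⟦X⟧} {f g : ℂ⟦X⟧} (h1 : Lim A f) (h2 : Lim B g) :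
    Lim (fun n => A n * B n) (f * g) := by
  intro d n hn
  rw [coeff_mul, coeff_mul]
  apply Finset.sum_congr rfl
  intro p hp
  rw [Finset.HasAntidiagonal.mem_antidiagonal] at hp
  rw [h1 p.1 n (by omega), h2 p.2 n (by omega)]

lemma Lim.const (f : ℂ⟦X⟧) : Lim (fun _ => f) f := fun _ _ _ => rfl

lemma Lim_Pf (z : ℂ) : Lim (fun n => Pf z n) (Pinf z) := by
  intro d n hn
  rw [Pinf_coeff z d n (by omega)]

end AuxC

noncomputable section AuxF

open Finset PowerSeries

/-- term of the Euler alternating series -/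
def cF (z : ℂ) (N n : ℕ) : ℂ⟦X⟧ :=
  C (R := ℂ) ((-1)^n * z^n) * (X ^ (n.choose 2 + N * n) * (Pf 1 n)⁻¹)

def SF (z : ℂ) (N k : ℕ) : ℂ⟦X⟧ := ∑ n ∈ Finset.range k, cF z N n

def LF (z : ℂ) (N : ℕ) : ℂ⟦X⟧ := PowerSeries.mk fun d => coeff (R := ℂ) d (SF z N (d+3))

lemma cF_zero (z : ℂ) (N : ℕ) : cF z N 0 = 1 := by
  simp [cF, Pf, inv_one]

lemma choose2_ge {n d : ℕ} (h : d + 2 ≤ n) : d + 1 ≤ n.choose 2 := by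
  calc d + 1 ≤ (d+2).choose 2 := by
        rw [Nat.choose_two_right]
        rw [Nat.le_div_iff_mul_le (by norm_num), show d+2-1 = d+1 by omega]
        nlinarith
    _ ≤ n.choose 2 := Nat.choose_le_choose 2 h

lemma coeff_X_pow_mul_zero {f : ℂ⟦X⟧} {d e : ℕ} (h : d < e) :
    coeff (R := ℂ) d (X ^ e * f) = 0 := by
  rw [coeff_X_pow_mul', if_neg (by omega)]

lemma cF_coeff_zero {z : ℂ} {N n d : ℕ} (h : d < n.choose 2 + N * n) :
    coeff (R := ℂ) d (cF z N n) = 0 := by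
  rw [cF, coeff_C_mul, coeff_X_pow_mul_zero h, mul_zero]

lemma cF_coeff_zero' {z : ℂ} {N n d : ℕ} (h : d + 2 ≤ n) :
    coeff (R := ℂ) d (cF z N n) = 0 :=
  cF_coeff_zero (by have := choose2_ge h; omega)

lemma coeff_SF_stable {z : ℂ} {N d k k' : ℕ} (h : d + 2 ≤ k) (h' : d + 2 ≤ k') :
    coeff (R := ℂ) d (SF z N k) = coeff (R := ℂ) d (SF z N k') := by
  have key : ∀ m, d + 2 ≤ m → coeff (R := ℂ) d (SF z N m) = coeff (R := ℂ) d (SF z N (d+2)) := by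
    intro m hm
    rw [SF, SF, map_sum, map_sum]
    symm
    apply Finset.sum_subset (Finset.range_subset_range.mpr hm)
    intro n hn hn2
    rw [Finset.mem_range] at hn hn2
    exact cF_coeff_zero' (by omega)
  rw [key k h, key k' h']

lemma Lim_SF (z : ℂ) (N : ℕ) : Lim (fun k => SF z N k) (LF z N) := by
  intro d n hn
  rw [LF, coeff_mk]
  exact coeff_SF_stable (by omega) (by omega)

/-- inverse Pochhammer recursion -/
lemma Pf1_succ (n : ℕ) : (Pf 1 (n+1) : ℂ⟦X⟧) = Pf 1 n * (1 - X^(n+1)) := by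
  rw [Pf_succ, map_one, one_mul]

lemma Pf_inv_rec (n : ℕ) : ((Pf 1 n)⁻¹ : ℂ⟦X⟧) = (1 - X^(n+1)) * (Pf 1 (n+1))⁻¹ := by
  symm
  rw [PowerSeries.eq_inv_iff_mul_eq_one (by rw [constPf]; exact one_ne_zero)]
  calc (1 - X^(n+1)) * (Pf 1 (n+1))⁻¹ * Pf 1 n
      = (Pf 1 (n+1))⁻¹ * (Pf 1 n * (1 - X^(n+1))) := by ring
    _ = 1 := by rw [← Pf1_succ, Pf_inv_mul]

/-- termwise recursion -/
lemma cF_rec (z : ℂ) (N n : ℕ) :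
    cF z N (n+1) = cF z (N+1) (n+1) - (C (R := ℂ) z * X^N) * cF z (N+1) n := by
  have hch : (n+1).choose 2 = n.choose 2 + n := by
    rw [show (2:ℕ) = 1 + 1 from rfl, Nat.choose_succ_succ, Nat.choose_one_right]
    ring
  have e1 : (n+1).choose 2 + (N+1) * (n+1) = ((n+1).choose 2 + N * (n+1)) + (n+1) := by ring
  have e2 : N + (n.choose 2 + (N+1) * n) = (n+1).choose 2 + N * (n+1) := by
    rw [hch]; ring
  rw [cF, cF, cF, Pf_inv_rec n, e1, ← e2, pow_add, pow_add]
  simp only [map_mul, map_pow, map_neg, map_one]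
  ring

lemma SF_rec (z : ℂ) (N k : ℕ) :
    SF z N (k+1) = (1 - C (R := ℂ) z * X^N) * SF z (N+1) (k+1) + (C (R := ℂ) z * X^N) * cF z (N+1) k := by
  have h3 : ∑ n ∈ Finset.range k, cF z N (n+1)
      = (∑ n ∈ Finset.range k, cF z (N+1) (n+1)) - (C (R := ℂ) z * X^N) * SF z (N+1) k := by
    rw [SF, Finset.mul_sum, ← Finset.sum_sub_distrib]
    apply Finset.sum_congr rfl
    intro n _
    exact cF_rec z N n
  have h4 : SF z (N+1) (k+1) = SF z (N+1) k + cF z (N+1) k := Finset.sum_range_succ _ _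
  have h1 : SF z N (k+1) = (∑ n ∈ Finset.range k, cF z N (n+1)) + cF z N 0 :=
    Finset.sum_range_succ' _ _
  rw [h1, h3, cF_zero, h4]
  have h5 : (∑ n ∈ Finset.range k, cF z (N+1) (n+1))
      = SF z (N+1) k + cF z (N+1) k - 1 := by
    have h2 : SF z (N+1) (k+1) = (∑ n ∈ Finset.range k, cF z (N+1) (n+1)) + cF z (N+1) 0 :=
      Finset.sum_range_succ' _ _
    rw [cF_zero] at h2
    linear_combination h4 - h2
  rw [h5]
  ring

lemma LF_rec (z : ℂ) (N : ℕ) : LF z N = (1 - C (R := ℂ) z * X^N) * LF z (N+1) := by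
  apply Lim.unique (Lim_SF z N)
  intro d n hn
  obtain ⟨k, rfl⟩ : ∃ k, n = k + 1 := ⟨n-1, by omega⟩
  show coeff (R := ℂ) d (SF z N (k+1)) = _
  rw [SF_rec]
  rw [map_add]
  have hb : coeff (R := ℂ) d ((C (R := ℂ) z * X^N) * cF z (N+1) k) = 0 := by
    apply coeff_mul_zero
    intro j hj
    exact cF_coeff_zero' (by omega)
  rw [hb, add_zero]
  exact coeff_mul_stable (fun j hj => Lim_SF z (N+1) j (k+1) (by omega))

lemma LF_prod (z : ℂ) (N : ℕ) :
    LF z 0 = (∏ i ∈ Finset.range N, (1 - C (R := ℂ) z * X^i)) * LF z N := by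
  induction N with
  | zero => simp
  | succ m ih =>
    rw [ih, LF_rec z m, Finset.prod_range_succ]
    ring

lemma LF_big_coeff (z : ℂ) {d N : ℕ} (h : d < N) : coeff (R := ℂ) d (LF z N) = coeff (R := ℂ) d 1 := by
  rw [LF, coeff_mk, SF, map_sum]
  rw [Finset.sum_eq_single 0]
  · rw [cF_zero]
  · intro n _ hn
    obtain ⟨m, rfl⟩ : ∃ m, n = m + 1 := ⟨n-1, by omega⟩
    apply cF_coeff_zero
    have : N ≤ N * (m+1) := Nat.le_mul_of_pos_right N (by omega)
    omega
  · intro h; simp at h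

lemma Euler1 (z : ℂ) : LF z 0 = (1 - C (R := ℂ) z) * Pinf z := by
  ext d
  rw [LF_prod z (d+2)]
  rw [coeff_mul_stable (fun j hj => LF_big_coeff z (by omega))]
  rw [mul_one]
  have hsplit : (∏ i ∈ Finset.range (d+2), (1 - C (R := ℂ) z * X^i))
      = (1 - C (R := ℂ) z) * Pf z (d+1) := by
    rw [Finset.prod_range_succ']
    rw [Pf]
    simp [mul_comm]
  rw [hsplit]
  rw [coeff_mul_stable (fun j hj => (Pinf_coeff z j (d+1) (by omega)).symm)]

def cG (z : ℂ) (N n : ℕ) : ℂ⟦X⟧ :=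
  C (R := ℂ) (z^n) * (X ^ ((N+1) * n) * (Pf 1 n)⁻¹)

def SG (z : ℂ) (N k : ℕ) : ℂ⟦X⟧ := ∑ n ∈ Finset.range k, cG z N n

def LG (z : ℂ) (N : ℕ) : ℂ⟦X⟧ := PowerSeries.mk fun d => coeff (R := ℂ) d (SG z N (d+3))

lemma cG_zero (z : ℂ) (N : ℕ) : cG z N 0 = 1 := by
  simp [cG, Pf, inv_one]

lemma cG_coeff_zero {z : ℂ} {N n d : ℕ} (h : d < (N+1) * n) :
    coeff (R := ℂ) d (cG z N n) = 0 := by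
  rw [cG, coeff_C_mul, coeff_X_pow_mul_zero h, mul_zero]

lemma cG_coeff_zero' {z : ℂ} {N n d : ℕ} (h : d + 1 ≤ n) :
    coeff (R := ℂ) d (cG z N n) = 0 := by
  apply cG_coeff_zero
  have : n ≤ (N+1) * n := Nat.le_mul_of_pos_left n (by omega)
  omega

lemma coeff_SG_stable {z : ℂ} {N d k k' : ℕ} (h : d + 1 ≤ k) (h' : d + 1 ≤ k') :
    coeff (R := ℂ) d (SG z N k) = coeff (R := ℂ) d (SG z N k') := by
  have key : ∀ m, d + 1 ≤ m → coeff (R := ℂ) d (SG z N m) = coeff (R := ℂ) d (SG z N (d+1)) := by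
    intro m hm
    rw [SG, SG, map_sum, map_sum]
    symm
    apply Finset.sum_subset (Finset.range_subset_range.mpr hm)
    intro n hn hn2
    rw [Finset.mem_range] at hn hn2
    exact cG_coeff_zero' (by omega)
  rw [key k h, key k' h']

lemma Lim_SG (z : ℂ) (N : ℕ) : Lim (fun k => SG z N k) (LG z N) := by
  intro d n hn
  rw [LG, coeff_mk]
  exact coeff_SG_stable (by omega) (by omega)

lemma cG_rec (z : ℂ) (N n : ℕ) :
    cG z N (n+1) = cG z (N+1) (n+1) + (C (R := ℂ) z * X^(N+1)) * cG z N n := by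
  have e1 : (N+2) * (n+1) = ((N+1) * (n+1)) + (n+1) := by ring
  have e2 : (N+1) + (N+1) * n = (N+1) * (n+1) := by ring
  rw [cG, cG, cG, Pf_inv_rec n, e1, ← e2, pow_add, pow_add]
  simp only [map_mul, map_pow]
  ring

lemma SG_rec (z : ℂ) (N k : ℕ) :
    SG z N (k+1) = SG z (N+1) (k+1) + (C (R := ℂ) z * X^(N+1)) * SG z N (k+1)
      - (C (R := ℂ) z * X^(N+1)) * cG z N k := by
  have h3 : ∑ n ∈ Finset.range k, cG z N (n+1)
      = (∑ n ∈ Finset.range k, cG z (N+1) (n+1)) + (C (R := ℂ) z * X^(N+1)) * SG z N k := by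
    rw [SG, Finset.mul_sum, ← Finset.sum_add_distrib]
    apply Finset.sum_congr rfl
    intro n _
    exact cG_rec z N n
  have h4 : SG z N (k+1) = SG z N k + cG z N k := Finset.sum_range_succ _ _
  have h1 : SG z N (k+1) = (∑ n ∈ Finset.range k, cG z N (n+1)) + cG z N 0 :=
    Finset.sum_range_succ' _ _
  have h2 : SG z (N+1) (k+1) = (∑ n ∈ Finset.range k, cG z (N+1) (n+1)) + cG z (N+1) 0 :=
    Finset.sum_range_succ' _ _
  rw [cG_zero] at h1 h2
  linear_combination h1 - h2 + h3 - (C (R := ℂ) z * X^(N+1)) * h4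

lemma LG_rec (z : ℂ) (N : ℕ) : (1 - C (R := ℂ) z * X^(N+1)) * LG z N = LG z (N+1) := by
  symm
  apply Lim.unique (Lim_SG z (N+1))
  intro d n hn
  obtain ⟨k, rfl⟩ : ∃ k, n = k + 1 := ⟨n-1, by omega⟩
  show coeff (R := ℂ) d (SG z (N+1) (k+1)) = _
  have hb : coeff (R := ℂ) d ((C (R := ℂ) z * X^(N+1)) * cG z N k) = 0 := by
    apply coeff_mul_zero
    intro j hj
    exact cG_coeff_zero' (by omega)
  have : SG z (N+1) (k+1) = (1 - C (R := ℂ) z * X^(N+1)) * SG z N (k+1) + (C (R := ℂ) z * X^(N+1)) * cG z N k := by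
    linear_combination -SG_rec z N k
  rw [this, map_add, hb, add_zero]
  exact coeff_mul_stable (fun j hj => Lim_SG z N j (k+1) (by omega))

lemma LG_prod (z : ℂ) (N : ℕ) : Pf z N * LG z 0 = LG z N := by
  induction N with
  | zero => simp [Pf]
  | succ m ih =>
    rw [← LG_rec z m, ← ih, Pf_succ]
    ring

lemma LG_big_coeff (z : ℂ) {d N : ℕ} (h : d < N) : coeff (R := ℂ) d (LG z N) = coeff (R := ℂ) d 1 := by
  rw [LG, coeff_mk, SG, map_sum]
  rw [Finset.sum_eq_single 0]
  · rw [cG_zero]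
  · intro n _ hn
    obtain ⟨m, rfl⟩ : ∃ m, n = m + 1 := ⟨n-1, by omega⟩
    apply cG_coeff_zero
    have : N + 1 ≤ (N+1) * (m+1) := Nat.le_mul_of_pos_right _ (by omega)
    omega
  · intro h; simp at h

lemma Euler2 (z : ℂ) : Pinf z * LG z 0 = 1 := by
  ext d
  rw [coeff_mul_stable' (fun j hj => Pinf_coeff z j (d+1) (by omega))]
  rw [LG_prod z (d+1)]
  exact LG_big_coeff z (by omega)

lemma Pinf_inv (z : ℂ) : (Pinf z)⁻¹ = LG z 0 := by
  symm
  rw [PowerSeries.eq_inv_iff_mul_eq_one (by rw [constPinf]; exact one_ne_zero)]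
  rw [mul_comm]
  exact Euler2 z

lemma CW_rel : (C (R := ℂ) ww)^2 + C (R := ℂ) ww + 1 = 0 := by
  have h := congrArg (C (R := ℂ)) hww
  simpa [map_add, map_pow, map_one] using h

lemma tripleFactor (k : ℕ) : (1 : ℂ⟦X⟧) - C (R := ℂ) 1 * X^(3*k)
    = (1 - C (R := ℂ) 1 * X^k) * (1 - C (R := ℂ) ww * X^k) * (1 - C (R := ℂ) (ww^2) * X^k) := by
  rw [map_one, one_mul, one_mul, mul_comm 3 k, pow_mul, map_pow]
  linear_combination (X^k - (X^k)^2 - (C (R := ℂ) ww - 1)*(X^k)^2 + (C (R := ℂ) ww - 1)*(X^k)^3) * CW_rel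

def Q3f (n : ℕ) : ℂ⟦X⟧ := ∏ i ∈ Finset.range n, (1 - C (R := ℂ) 1 * X^(3*(i+1)))

def Q3 : ℂ⟦X⟧ := PowerSeries.mk fun d => coeff (R := ℂ) d (Q3f (d+1))

lemma Q3f_eq (n : ℕ) : Q3f n = Pf 1 n * Pf ww n * Pf (ww^2) n := by
  rw [Q3f, Pf, Pf, Pf, ← Finset.prod_mul_distrib, ← Finset.prod_mul_distrib]
  apply Finset.prod_congr rfl
  intro i _
  exact tripleFactor (i+1)

lemma Lim_Q3f : Lim (fun n => Q3f n) Q3 := by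
  intro d n hn
  rw [Q3, coeff_mk]
  show coeff (R := ℂ) d (Q3f n) = coeff (R := ℂ) d (Q3f (d+1))
  rw [Q3f, Q3f]
  exact (stab_gen 1 (fun i => 3*(i+1)) (fun i => by show i + 1 ≤ 3*(i+1); omega) d n (by omega))

lemma Q3_eq : Q3 = Pinf 1 * Pinf ww * Pinf (ww^2) := by
  apply Lim.unique Lim_Q3f
  have h := ((Lim_Pf 1).mul (Lim_Pf ww)).mul (Lim_Pf (ww^2))
  intro d n hn
  show coeff (R := ℂ) d (Q3f n) = _
  rw [Q3f_eq]
  exact h d n hn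

lemma sum_range_triple (f : ℕ → ℂ) (K : ℕ) :
    ∑ n ∈ Finset.range (3*K), f n
      = ∑ m ∈ Finset.range K, (f (3*m) + f (3*m+1) + f (3*m+2)) := by
  induction K with
  | zero => simp
  | succ K ih =>
    have h3 : 3*(K+1) = 3*K+1+1+1 := by ring
    have e : (3*K+1+1 : ℕ) = 3*K+2 := rfl
    rw [h3, Finset.sum_range_succ, Finset.sum_range_succ, Finset.sum_range_succ, ih,
      Finset.sum_range_succ, e]
    ring

/-- the LHS inner sum over ℂ -/
def SL : ℂ⟦X⟧ := PowerSeries.mk fun d => coeff (R := ℂ) d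
  (∑ m ∈ Finset.range (d+1),
    C (R := ℂ) ((-1)^m) * (X^((3*m+1)*(3*m+2)/2) * (Pf 1 (3*m+2))⁻¹))

/-- the RHS inner sum over ℂ -/
def SR : ℂ⟦X⟧ := PowerSeries.mk fun d => coeff (R := ℂ) d
  (∑ k ∈ Finset.range (d+1),
    C (R := ℂ) ((chi (k:ℤ) : ℤ) : ℂ) * (X^k * (Pf 1 k)⁻¹))

lemma exp_eq (m : ℕ) : (3*m+1)*(3*m+2)/2 = (3*m+2).choose 2 := by
  rw [Nat.choose_two_right, show (3*m+2) - 1 = 3*m+1 by omega, mul_comm]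

lemma negpow (m : ℕ) : ((-1 : ℂ))^(3*m+2) = (-1)^m := by
  rw [pow_add, pow_mul]
  norm_num

lemma s_eval_0 (m : ℕ) : (1 : ℂ) + ww^(3*m+1) + ww^(2*(3*m+1)) = 0 := by
  rw [ww_pow_mod (3*m+1), ww_pow_mod (2*(3*m+1)), show (3*m+1) % 3 = 1 by omega,
    show (2*(3*m+1)) % 3 = 2 by omega]
  linear_combination hww

lemma s_eval_1 (m : ℕ) : (1 : ℂ) + ww^(3*m+2) + ww^(2*(3*m+2)) = 0 := by
  rw [ww_pow_mod (3*m+2), ww_pow_mod (2*(3*m+2)), show (3*m+2) % 3 = 2 by omega,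
    show (2*(3*m+2)) % 3 = 1 by omega]
  linear_combination hww

lemma s_eval_2 (m : ℕ) : (1 : ℂ) + ww^(3*m+3) + ww^(2*(3*m+3)) = 3 := by
  rw [ww_pow_mod (3*m+3), ww_pow_mod (2*(3*m+3)), show (3*m+3) % 3 = 0 by omega,
    show (2*(3*m+3)) % 3 = 0 by omega]
  norm_num

lemma chi_ww (n : ℕ) : (((chi (n:ℤ) : ℤ) : ℂ)) * (ww - ww^2) = ww^n - ww^(2*n) := by
  rcases (by omega : n % 3 = 0 ∨ n % 3 = 1 ∨ n % 3 = 2) with h|h|h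
  · have hz : (n:ℤ) % 3 = 0 := by omega
    rw [ww_pow_mod n, ww_pow_mod (2*n), h, show (2*n) % 3 = 0 by omega]
    have hc : chi (n:ℤ) = 0 := by simp [chi, hz]
    rw [hc]
    push_cast
    ring
  · have hz : (n:ℤ) % 3 = 1 := by omega
    rw [ww_pow_mod n, ww_pow_mod (2*n), h, show (2*n) % 3 = 2 by omega]
    have hc : chi (n:ℤ) = 1 := by simp [chi, hz]
    rw [hc]
    push_cast
    ring
  · have hz : (n:ℤ) % 3 = 2 := by omega
    rw [ww_pow_mod n, ww_pow_mod (2*n), h, show (2*n) % 3 = 1 by omega]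
    have hc : chi (n:ℤ) = -1 := by simp [chi, hz]
    rw [hc]
    push_cast
    ring

lemma dissect1 (t : ℕ → ℂ) (d : ℕ) (ht : ∀ n, d+2 ≤ n → t n = 0) :
    3 * ∑ m ∈ Finset.range (d+1), (-1)^m * t (3*m+2)
      = ∑ n ∈ Finset.range (d+3), ((-1)^n * (1 + ww^(n+1) + ww^(2*(n+1)))) * t n := by
  have hext : ∑ n ∈ Finset.range (d+3), ((-1)^n * (1 + ww^(n+1) + ww^(2*(n+1)))) * t n
      = ∑ n ∈ Finset.range (3*(d+3)), ((-1)^n * (1 + ww^(n+1) + ww^(2*(n+1)))) * t n := by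
    apply Finset.sum_subset (Finset.range_subset_range.mpr (by omega))
    intro n _ hn2
    rw [Finset.mem_range] at hn2
    rw [ht n (by omega), mul_zero]
  rw [hext, sum_range_triple (fun n => ((-1)^n * (1 + ww^(n+1) + ww^(2*(n+1)))) * t n) (d+3)]
  have hterm : ∀ m, ((-1)^(3*m) * (1 + ww^(3*m+1) + ww^(2*(3*m+1)))) * t (3*m)
      + ((-1)^(3*m+1) * (1 + ww^(3*m+1+1) + ww^(2*(3*m+1+1)))) * t (3*m+1)
      + ((-1)^(3*m+2) * (1 + ww^(3*m+2+1) + ww^(2*(3*m+2+1)))) * t (3*m+2)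
      = 3 * ((-1)^m * t (3*m+2)) := by
    intro m
    have e1 : (3*m+1+1 : ℕ) = 3*m+2 := rfl
    have e2 : (3*m+2+1 : ℕ) = 3*m+3 := rfl
    rw [e1, e2, s_eval_0, s_eval_1, s_eval_2, negpow]
    ring
  calc 3 * ∑ m ∈ Finset.range (d+1), (-1)^m * t (3*m+2)
      = ∑ m ∈ Finset.range (d+1), 3 * ((-1)^m * t (3*m+2)) := by rw [Finset.mul_sum]
    _ = ∑ m ∈ Finset.range (d+3), 3 * ((-1)^m * t (3*m+2)) := by
        apply Finset.sum_subset (Finset.range_subset_range.mpr (by omega))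
        intro m _ hm2
        rw [Finset.mem_range] at hm2
        rw [ht (3*m+2) (by omega), mul_zero, mul_zero]
    _ = _ := by
        refine Finset.sum_congr rfl fun m _ => ?_
        exact (hterm m).symm

lemma dissect2 (t : ℕ → ℂ) (d : ℕ) (ht : ∀ n, d+1 ≤ n → t n = 0) :
    (ww - ww^2) * ∑ k ∈ Finset.range (d+1), ((chi (k:ℤ) : ℤ) : ℂ) * t k
      = ∑ n ∈ Finset.range (d+3), (ww^n - (ww^2)^n) * t n := by
  have hext : ∑ k ∈ Finset.range (d+1), ((chi (k:ℤ) : ℤ) : ℂ) * t k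
      = ∑ k ∈ Finset.range (d+3), ((chi (k:ℤ) : ℤ) : ℂ) * t k := by
    apply Finset.sum_subset (Finset.range_subset_range.mpr (by omega))
    intro n _ hn2
    rw [Finset.mem_range] at hn2
    rw [ht n (by omega), mul_zero]
  rw [hext, Finset.mul_sum]
  refine Finset.sum_congr rfl fun n _ => ?_
  have h := chi_ww n
  rw [pow_mul] at h
  calc (ww - ww^2) * (((chi (n:ℤ) : ℤ) : ℂ) * t n)
      = (((chi (n:ℤ) : ℤ) : ℂ) * (ww - ww^2)) * t n := by ring
    _ = (ww^n - (ww^2)^n) * t n := by rw [h]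

lemma DIS1 : C (R := ℂ) 3 * SL = LF 1 0 + C (R := ℂ) ww * LF ww 0 + C (R := ℂ) (ww^2) * LF (ww^2) 0 := by
  ext d
  set t : ℕ → ℂ := fun n => coeff (R := ℂ) d (X^(n.choose 2) * (Pf 1 n)⁻¹) with ht_def
  have ht : ∀ n, d+2 ≤ n → t n = 0 := fun n hn =>
    coeff_X_pow_mul_zero (by have := choose2_ge hn; omega)
  have hSL : coeff (R := ℂ) d SL = ∑ m ∈ Finset.range (d+1), (-1)^m * t (3*m+2) := by
    rw [SL, coeff_mk, map_sum]
    refine Finset.sum_congr rfl fun m _ => ?_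
    rw [exp_eq, coeff_C_mul]
  have hLF : ∀ z : ℂ, coeff (R := ℂ) d (LF z 0) = ∑ n ∈ Finset.range (d+3), ((-1)^n * z^n) * t n := by
    intro z
    rw [LF, coeff_mk, SF, map_sum]
    refine Finset.sum_congr rfl fun n _ => ?_
    rw [cF, show n.choose 2 + 0*n = n.choose 2 by omega, coeff_C_mul]
  rw [map_add, map_add, coeff_C_mul, coeff_C_mul, coeff_C_mul, hSL, hLF 1, hLF ww, hLF (ww^2)]
  rw [dissect1 t d ht, Finset.mul_sum, Finset.mul_sum, ← Finset.sum_add_distrib,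
    ← Finset.sum_add_distrib]
  refine Finset.sum_congr rfl fun n _ => ?_
  rw [one_pow, pow_succ, show 2*(n+1) = 2*n+2 by ring, pow_add, pow_mul]
  ring

lemma DIS2 : C (R := ℂ) (ww - ww^2) * SR = LG ww 0 - LG (ww^2) 0 := by
  ext d
  set t : ℕ → ℂ := fun n => coeff (R := ℂ) d (X^n * (Pf 1 n)⁻¹) with ht_def
  have ht : ∀ n, d+1 ≤ n → t n = 0 := fun n hn => coeff_X_pow_mul_zero (by omega)
  have hSR : coeff (R := ℂ) d SR = ∑ k ∈ Finset.range (d+1), ((chi (k:ℤ) : ℤ) : ℂ) * t k := by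
    rw [SR, coeff_mk, map_sum]
    refine Finset.sum_congr rfl fun k _ => ?_
    rw [coeff_C_mul]
  have hLG : ∀ z : ℂ, coeff (R := ℂ) d (LG z 0) = ∑ n ∈ Finset.range (d+3), z^n * t n := by
    intro z
    rw [LG, coeff_mk, SG, map_sum]
    refine Finset.sum_congr rfl fun n _ => ?_
    rw [cG, show (0+1)*n = n by omega, coeff_C_mul]
  rw [coeff_C_mul, hSR, map_sub, hLG ww, hLG (ww^2), dissect2 t d ht,
    ← Finset.sum_sub_distrib]
  refine Finset.sum_congr rfl fun n _ => ?_
  ring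

lemma constQ3 : constantCoeff (R := ℂ) Q3 = 1 := by
  rw [Q3_eq, map_mul, map_mul, constPinf, constPinf, constPinf]
  norm_num

lemma mainC : Pinf 1 * Q3⁻¹ * SL = SR := by
  have h1 : Q3 * Q3⁻¹ = 1 := PowerSeries.mul_inv_cancel _ (by rw [constQ3]; exact one_ne_zero)
  have hneg : C (R := ℂ) (ww^2 - ww) = - C (R := ℂ) (ww - ww^2) := by
    rw [← map_neg]
    congr 1
    ring
  have h0 : (1 : ℂ⟦X⟧) - C (R := ℂ) 1 = 0 := by rw [map_one, sub_self]
  have hc1 : C (R := ℂ) ww * (1 - C (R := ℂ) ww) = C (R := ℂ) (ww - ww^2) := by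
    rw [map_sub, map_pow]
    ring
  have hc2 : C (R := ℂ) (ww^2) * (1 - C (R := ℂ) (ww^2)) = C (R := ℂ) (ww^2 - ww) := by
    have hsc : ww^2 * (1 - ww^2) = ww^2 - ww := by linear_combination (-ww) * hww3
    rw [← hsc, map_mul, map_sub, map_one]
  have hF1' := DIS1
  rw [Euler1 1, Euler1 ww, Euler1 (ww^2)] at hF1'
  have h2 : C (R := ℂ) 3 * SL = C (R := ℂ) (ww - ww^2) * Pinf ww - C (R := ℂ) (ww - ww^2) * Pinf (ww^2) := by
    linear_combination hF1' + Pinf 1 * h0 + Pinf ww * hc1 + Pinf (ww^2) * hc2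
      + Pinf (ww^2) * hneg
  have h3 : C (R := ℂ) (ww - ww^2) * SR = LG ww 0 - LG (ww^2) 0 := DIS2
  have h4 : Pinf ww * LG ww 0 = 1 := Euler2 ww
  have h5 : Pinf (ww^2) * LG (ww^2) 0 = 1 := Euler2 (ww^2)
  have h6 : Q3 = Pinf 1 * Pinf ww * Pinf (ww^2) := Q3_eq
  have h7 : C (R := ℂ) (ww - ww^2) * C (R := ℂ) (ww - ww^2) = - C (R := ℂ) 3 := by
    rw [← map_mul, ← map_neg]
    congr 1
    linear_combination hwwsq
  have hW : (C (R := ℂ) 3 * C (R := ℂ) (ww - ww^2) * Q3 : ℂ⟦X⟧) ≠ 0 := by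
    intro h
    have hcc := congrArg (constantCoeff (R := ℂ)) h
    rw [map_mul, map_mul, constantCoeff_C, constantCoeff_C, constQ3, mul_one, map_zero] at hcc
    exact (mul_ne_zero (by norm_num) hwwne) hcc
  apply mul_left_cancel₀ hW
  linear_combination (C (R := ℂ) 3 * C (R := ℂ) (ww - ww^2) * Pinf 1 * SL) * h1 + (C (R := ℂ) (ww - ww^2) * Pinf 1) * h2
    + (Pinf 1 * Pinf ww - Pinf 1 * Pinf (ww^2)) * h7 - (C (R := ℂ) 3 * Q3) * h3
    - (C (R := ℂ) 3 * (LG ww 0 - LG (ww^2) 0)) * h6 - (C (R := ℂ) 3 * Pinf 1 * Pinf (ww^2)) * h4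
    + (C (R := ℂ) 3 * Pinf 1 * Pinf ww) * h5

lemma hinj : Function.Injective (PowerSeries.map (algebraMap ℚ ℂ)) := by
  intro f g h
  ext n
  apply (algebraMap ℚ ℂ).injective
  rw [← PowerSeries.coeff_map, ← PowerSeries.coeff_map, h]

lemma constPochP (n : ℕ) : constantCoeff (R := ℚ) (pochP 1 n) = 1 := by
  rw [pochP, map_prod]
  apply Finset.prod_eq_one
  intro i _
  simp [zero_pow]

lemma map_pochP (n : ℕ) : PowerSeries.map (algebraMap ℚ ℂ) (pochP 1 n) = Pf 1 n := by
  rw [pochP, Pf, map_prod]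
  refine Finset.prod_congr rfl fun i _ => ?_
  rw [map_sub, map_one, map_pow, PowerSeries.map_X, one_mul, map_one, one_mul]

lemma map_inv' (f : ℚ⟦X⟧) (h : constantCoeff (R := ℚ) f ≠ 0) :
    PowerSeries.map (algebraMap ℚ ℂ) f⁻¹ = (PowerSeries.map (algebraMap ℚ ℂ) f)⁻¹ := by
  have hconst : constantCoeff (R := ℂ) (PowerSeries.map (algebraMap ℚ ℂ) f) ≠ 0 := by
    rw [← coeff_zero_eq_constantCoeff, PowerSeries.coeff_map]
    intro hh
    exact h (by rwa [_root_.map_eq_zero, coeff_zero_eq_constantCoeff] at hh)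
  rw [PowerSeries.eq_inv_iff_mul_eq_one hconst, ← map_mul,
    PowerSeries.inv_mul_cancel f h, map_one]

lemma map_pochP_inv (n : ℕ) :
    PowerSeries.map (algebraMap ℚ ℂ) ((pochP 1 n)⁻¹) = (Pf 1 n)⁻¹ := by
  rw [map_inv' _ (by rw [constPochP]; exact one_ne_zero), map_pochP]

lemma map_pochInf1 : PowerSeries.map (algebraMap ℚ ℂ) (pochInf 1) = Pinf 1 := by
  ext d
  rw [PowerSeries.coeff_map, pochInf, coeff_mk, Pinf, coeff_mk,
    ← PowerSeries.coeff_map, map_pochP]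

lemma map_pochP3 (n : ℕ) : PowerSeries.map (algebraMap ℚ ℂ) (pochP 3 n) = Q3f n := by
  rw [pochP, Q3f, map_prod]
  refine Finset.prod_congr rfl fun i _ => ?_
  rw [map_sub, map_one, map_pow, PowerSeries.map_X, map_one, one_mul]

lemma map_pochInf3 : PowerSeries.map (algebraMap ℚ ℂ) (pochInf 3) = Q3 := by
  ext d
  rw [PowerSeries.coeff_map, pochInf, coeff_mk, Q3, coeff_mk,
    ← PowerSeries.coeff_map, map_pochP3]

lemma constPochInf3 : constantCoeff (R := ℚ) (pochInf 3) = 1 := by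
  have : constantCoeff (R := ℚ) (pochP 3 1) = 1 := by
    rw [pochP, map_prod]
    apply Finset.prod_eq_one
    intro i _
    simp [zero_pow]
  rw [pochInf, ← coeff_zero_eq_constantCoeff, coeff_mk, coeff_zero_eq_constantCoeff, this]

lemma map_SL : PowerSeries.map (algebraMap ℚ ℂ)
    (PowerSeries.mk fun d => coeff d
      (∑ m ∈ Finset.range (d + 1),
        ((-1 : ℚ) ^ m) • ((X : PowerSeries ℚ) ^ ((3 * m + 1) * (3 * m + 2) / 2)
          * (pochP 1 (3 * m + 2))⁻¹))) = SL := by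
  ext d
  rw [PowerSeries.coeff_map, coeff_mk, SL, coeff_mk, ← PowerSeries.coeff_map, map_sum]
  congr 1
  refine Finset.sum_congr rfl fun m _ => ?_
  simp only [smul_eq_C_mul, map_mul, PowerSeries.map_C, map_pow, PowerSeries.map_X,
    map_pochP_inv, map_neg, map_one]

lemma map_SR : PowerSeries.map (algebraMap ℚ ℂ)
    (PowerSeries.mk fun d => coeff d
      (∑ k ∈ Finset.range (d + 1),
        ((chi (k : ℤ) : ℚ)) • ((X : PowerSeries ℚ) ^ k * (pochP 1 k)⁻¹))) = SR := by
  ext d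
  rw [PowerSeries.coeff_map, coeff_mk, SR, coeff_mk, ← PowerSeries.coeff_map, map_sum]
  congr 1
  refine Finset.sum_congr rfl fun k _ => ?_
  simp only [smul_eq_C_mul, map_mul, PowerSeries.map_C, map_pow, PowerSeries.map_X,
    map_pochP_inv, map_intCast]


theorem stmt13 :
    pochInf 1 * (pochInf 3)⁻¹ *
        (PowerSeries.mk fun d => coeff d
          (∑ m ∈ range (d + 1),
            ((-1 : ℚ) ^ m) • ((X : PowerSeries ℚ) ^ ((3 * m + 1) * (3 * m + 2) / 2)
              * (pochP 1 (3 * m + 2))⁻¹)))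
      = PowerSeries.mk fun d => coeff d
          (∑ k ∈ range (d + 1),
            ((chi (k : ℤ) : ℚ)) • ((X : PowerSeries ℚ) ^ k * (pochP 1 k)⁻¹)) := by
  apply hinj
  rw [map_mul, map_mul, map_pochInf1, map_inv' _ (by rw [constPochInf3]; exact one_ne_zero),
    map_pochInf3, map_SL, map_SR]
  exact mainC
end AuxF
end

section
/- As formal power series in q: ((q;q)_∞ / (q³;q³)_∞) · ∑_{m≥0} (-1)^m q^{3m(3m-1)/2} / (q;q)_{3m} = ∑_{k≥0} χ(k+1) q^k / (q;q)_k, where χ(m) is the Jacobi symbol (m/3). -/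
open Finset PowerSeries

namespace QAux

noncomputable abbrev ps := PowerSeries ℂ

noncomputable def ω : ℂ := ⟨-1/2, Real.sqrt 3 / 2⟩

lemma omega_eq : ω = -1/2 + (Real.sqrt 3 : ℂ) / 2 * Complex.I := by
  apply Complex.ext <;> simp [ω]

lemma hom : ω ^ 2 + ω + 1 = 0 := by
  have h3 : ((Real.sqrt 3 : ℝ) : ℂ) ^ 2 = 3 := by
    rw [← Complex.ofReal_pow, Real.sq_sqrt (by norm_num : (3:ℝ) ≥ 0)]
    norm_num
  rw [omega_eq]
  linear_combination (Complex.I ^ 2 / 4) * h3 + (3/4 : ℂ) * Complex.I_sq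

lemma hom3 : ω ^ 3 = 1 := by linear_combination (ω - 1) * hom

/-- congruence mod X^(d+1) -/
def Cg (d : ℕ) (f g : ps) : Prop := (X : ps) ^ (d+1) ∣ (f - g)

lemma Cg.coeff_eq {d : ℕ} {f g : ps} (h : Cg d f g) {i : ℕ} (hi : i ≤ d) :
    coeff i f = coeff i g := by
  have := (PowerSeries.X_pow_dvd_iff.1 h) i (by omega)
  rw [map_sub, sub_eq_zero] at this; exact this

lemma Cg.of {d : ℕ} {f g : ps} (h : ∀ i ≤ d, coeff i f = coeff i g) : Cg d f g := by
  refine PowerSeries.X_pow_dvd_iff.2 fun m hm => ?_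
  rw [map_sub, sub_eq_zero]; exact h m (by omega)

lemma Cg.refl {d : ℕ} (f : ps) : Cg d f f := by simp [Cg]

lemma Cg.symm {d : ℕ} {f g : ps} (h : Cg d f g) : Cg d g f := by
  unfold Cg at h ⊢; rw [show g - f = -(f - g) by ring]; exact h.neg_right

lemma Cg.trans {d : ℕ} {f g h : ps} (h1 : Cg d f g) (h2 : Cg d g h) : Cg d f h := by
  have := dvd_add h1 h2; simpa [Cg] using this

lemma Cg.mul {d : ℕ} {f g h k : ps} (h1 : Cg d f g) (h2 : Cg d h k) :
    Cg d (f * h) (g * k) := by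
  have : f * h - g * k = (f - g) * h + g * (h - k) := by ring
  unfold Cg; rw [this]
  exact dvd_add (h1.mul_right h) (h2.mul_left g)

lemma Cg.inv {d : ℕ} {f g : ps} (hf : constantCoeff f ≠ 0) (hg : constantCoeff g ≠ 0)
    (h : Cg d f g) : Cg d f⁻¹ g⁻¹ := by
  have key : f⁻¹ - g⁻¹ = f⁻¹ * ((g - f) * g⁻¹) := by
    have h1 := PowerSeries.mul_inv_cancel f hf
    have h2 := PowerSeries.inv_mul_cancel g hg
    calc f⁻¹ - g⁻¹ = f⁻¹ * (g * g⁻¹) - (f⁻¹ * f) * g⁻¹ := by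
          rw [PowerSeries.mul_inv_cancel g hg, PowerSeries.inv_mul_cancel f hf]; ring
      _ = f⁻¹ * ((g - f) * g⁻¹) := by ring
  unfold Cg; rw [key]
  exact Dvd.dvd.mul_left ((h.symm).mul_right g⁻¹) f⁻¹

lemma coeff_zero_of_X_pow_dvd {m i : ℕ} {f : ps} (h : (X : ps) ^ m ∣ f) (hi : i < m) :
    coeff i f = 0 := (PowerSeries.X_pow_dvd_iff.1 h) i hi

/-- triangular number -/
def e (n : ℕ) : ℕ := ∑ i ∈ range n, i

lemma e_succ (n : ℕ) : e (n+1) = e n + n := Finset.sum_range_succ _ _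

lemma e_eq (n : ℕ) : e n = n * (n-1) / 2 := Finset.sum_range_id n

lemma le_e_succ (n : ℕ) : n ≤ e (n+1) := by rw [e_succ]; omega

lemma pred_le_e (n : ℕ) : n - 1 ≤ e n := by
  cases n with
  | zero => simp [e]
  | succ m => simpa using le_e_succ m

/-- partial product ∏_{i=0}^{n-1} (1 - c X^(t+i)) -/
noncomputable def pp (c : ℂ) (t n : ℕ) : ps :=
  ∏ i ∈ range n, (1 - PowerSeries.C c * X ^ (t+i))

lemma pp_succ (c : ℂ) (t n : ℕ) :
    pp c t (n+1) = pp c t n * (1 - PowerSeries.C c * X ^ (t+n)) :=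
  Finset.prod_range_succ _ _

lemma pp_succ' (c : ℂ) (t n : ℕ) :
    pp c t (n+1) = (1 - PowerSeries.C c * X ^ t) * pp c (t+1) n := by
  rw [pp, Finset.prod_range_succ', add_zero, pp, mul_comm]
  congr 1
  exact Finset.prod_congr rfl fun i _ => by rw [show t+(i+1) = t+1+i by omega]

lemma constantCoeff_pp (c : ℂ) {t : ℕ} (ht : 1 ≤ t) (n : ℕ) :
    constantCoeff (pp c t n) = 1 := by
  rw [pp, map_prod]
  refine Finset.prod_eq_one fun i _ => ?_
  have : constantCoeff ((X : ps) ^ (t+i)) = 0 := by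
    rw [map_pow, PowerSeries.constantCoeff_X, zero_pow (by omega)]
  simp [this]

lemma pp_ne_zero (c : ℂ) {t : ℕ} (ht : 1 ≤ t) (n : ℕ) : pp c t n ≠ 0 := fun h => by
  have := constantCoeff_pp c ht n; rw [h, map_zero] at this; exact one_ne_zero this.symm

/-- Pochhammer (q;q)_n -/
noncomputable def pk (n : ℕ) : ps := pp 1 1 n

lemma constantCoeff_pk (n : ℕ) : constantCoeff (pk n) = 1 := constantCoeff_pp 1 le_rfl n

lemma pk_ne_zero (n : ℕ) : pk n ≠ 0 := pp_ne_zero 1 le_rfl n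

lemma pk_inv_mul (n : ℕ) : (pk n)⁻¹ * pk n = 1 :=
  PowerSeries.inv_mul_cancel _ (by rw [constantCoeff_pk]; exact one_ne_zero)

lemma pk_succ (n : ℕ) : pk (n+1) = pk n * (1 - X ^ (n+1)) := by
  have := pp_succ 1 1 n
  rw [pk, pk, this, map_one, one_mul, add_comm 1 n]

/-- the infinite product Π_{i≥0}(1 - c X^{t+i}), t ≥ 1 -/
noncomputable def Pinf (c : ℂ) (t : ℕ) : ps := mk fun d => coeff d (pp c t (d+1))

lemma coeff_pp_stable (c : ℂ) {t : ℕ} (ht : 1 ≤ t) {i m n : ℕ} (him : i < m) (hmn : m ≤ n) :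
    coeff i (pp c t n) = coeff i (pp c t m) := by
  induction n with
  | zero => omega
  | succ n ih =>
    rcases Nat.lt_or_ge m (n+1) with h | h
    · have hn : m ≤ n := by omega
      rw [pp_succ, mul_sub, mul_one, map_sub, ih hn]
      have : coeff i (pp c t n * (PowerSeries.C c * X ^ (t+n))) = 0 := by
        refine coeff_zero_of_X_pow_dvd (m := t+n) ?_ (by omega)
        exact Dvd.dvd.mul_left (Dvd.dvd.mul_left dvd_rfl _) _
      rw [this, sub_zero]
    · have : m = n+1 := by omega
      subst this; rfl

lemma Cg_Pinf_pp (c : ℂ) {t : ℕ} (ht : 1 ≤ t) {d n : ℕ} (hn : d + 1 ≤ n) :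
    Cg d (Pinf c t) (pp c t n) := by
  refine Cg.of fun i hi => ?_
  rw [Pinf, coeff_mk]
  exact (coeff_pp_stable c ht (Nat.lt_succ_self i) (by omega)).symm

lemma constantCoeff_Pinf (c : ℂ) {t : ℕ} (ht : 1 ≤ t) : constantCoeff (Pinf c t) = 1 := by
  rw [← coeff_zero_eq_constantCoeff_apply, Pinf, coeff_mk,
    coeff_zero_eq_constantCoeff_apply, constantCoeff_pp c ht]

lemma Pinf_step (c : ℂ) {t : ℕ} (ht : 1 ≤ t) :
    Pinf c t = (1 - PowerSeries.C c * X ^ t) * Pinf c (t+1) := by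
  refine PowerSeries.ext fun d => ?_
  have h1 : Cg d (Pinf c (t+1)) (pp c (t+1) (d+1)) := Cg_Pinf_pp c (by omega) le_rfl
  have h2 := (Cg.refl (d := d) (1 - PowerSeries.C c * X ^ t)).mul h1
  rw [h2.coeff_eq le_rfl, ← pp_succ', Pinf, coeff_mk]
  exact (coeff_pp_stable c ht (show d < d+1 by omega) (show d+1 ≤ d+1+1 by omega)).symm

lemma Pinf_telescope (c : ℂ) {t : ℕ} (ht : 1 ≤ t) (s : ℕ) :
    Pinf c t = pp c t s * Pinf c (t+s) := by
  induction s with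
  | zero => simp [pp]
  | succ s ih =>
    rw [ih, pp_succ, Pinf_step c (t := t+s) (by omega), mul_assoc, ← add_assoc]

lemma Cg_Pinf_one (c : ℂ) {d t : ℕ} (ht : d + 1 ≤ t) : Cg d (Pinf c t) 1 := by
  refine (Cg_Pinf_pp c (by omega) (n := d+1) le_rfl).trans (Cg.of fun i hi => ?_)
  suffices h : ∀ n : ℕ, coeff i (pp c t n) = coeff i (1 : ps) from h _
  intro n
  induction n with
  | zero => rfl
  | succ n ih =>
    rw [pp_succ, mul_sub, mul_one, map_sub, ih]
    have : coeff i (pp c t n * (PowerSeries.C c * X ^ (t+n))) = 0 := by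
      refine coeff_zero_of_X_pow_dvd (m := t+n) ?_ (by omega)
      exact Dvd.dvd.mul_left (Dvd.dvd.mul_left dvd_rfl _) _
    rw [this, sub_zero]

/-- term c^k X^(t k) / (q;q)_k -/
noncomputable def gT (c : ℂ) (t k : ℕ) : ps :=
  PowerSeries.C (c ^ k) * (X ^ (t*k) * (pk k)⁻¹)

lemma one_inv_ps : (1 : ps)⁻¹ = 1 := by
  have h := PowerSeries.inv_mul_cancel (1 : ps) (by simp)
  rw [mul_one] at h
  exact h

lemma gT_zero (c : ℂ) (t : ℕ) : gT c t 0 = 1 := by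
  simp [gT, pk, pp, one_inv_ps]

lemma X_pow_dvd_gT (c : ℂ) (t k : ℕ) : (X : ps) ^ (t*k) ∣ gT c t k := by
  unfold gT
  exact Dvd.dvd.mul_left (Dvd.dvd.mul_right dvd_rfl _) _

lemma coeff_gT_zero (c : ℂ) {t k d : ℕ} (h : d < t*k) : coeff d (gT c t k) = 0 :=
  coeff_zero_of_X_pow_dvd (X_pow_dvd_gT c t k) h

/-- termwise functional equation -/
lemma gT_rec (c : ℂ) (t k : ℕ) :
    gT c t (k+1) = gT c (t+1) (k+1) + (PowerSeries.C c * X ^ t) * gT c t k := by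
  have hcan : ∀ f g : ps, f * pk (k+1) = g * pk (k+1) → f = g := by
    intro f g h
    exact mul_right_cancel₀ (pk_ne_zero (k+1)) h
  apply hcan
  have h1 : (pk (k+1))⁻¹ * pk (k+1) = 1 := pk_inv_mul (k+1)
  have h2 : (pk k)⁻¹ * pk (k+1) = 1 - X ^ (k+1) := by
    rw [pk_succ, ← mul_assoc, pk_inv_mul, one_mul]
  calc gT c t (k+1) * pk (k+1)
      = PowerSeries.C (c ^ (k+1)) * X ^ (t*(k+1)) * ((pk (k+1))⁻¹ * pk (k+1)) := by
        unfold gT; ring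
    _ = PowerSeries.C (c ^ (k+1)) * X ^ (t*(k+1)) := by rw [h1, mul_one]
    _ = (gT c (t+1) (k+1) + (PowerSeries.C c * X ^ t) * gT c t k) * pk (k+1) := by
        rw [add_mul]
        have e1 : gT c (t+1) (k+1) * pk (k+1)
            = PowerSeries.C (c ^ (k+1)) * X ^ ((t+1)*(k+1)) := by
          unfold gT
          rw [show (PowerSeries.C (c^(k+1)) * (X ^ ((t+1)*(k+1)) * (pk (k+1))⁻¹)) * pk (k+1)
            = PowerSeries.C (c^(k+1)) * X ^ ((t+1)*(k+1)) * ((pk (k+1))⁻¹ * pk (k+1)) by ring,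
            h1, mul_one]
        have e2 : (PowerSeries.C c * X ^ t) * gT c t k * pk (k+1)
            = PowerSeries.C (c ^ (k+1)) * (X ^ (t*(k+1)) * (1 - X ^ (k+1))) := by
          unfold gT
          rw [show PowerSeries.C c * X ^ t * (PowerSeries.C (c^k) * (X ^ (t*k) * (pk k)⁻¹)) * pk (k+1)
            = PowerSeries.C c * PowerSeries.C (c^k) * (X ^ t * X ^ (t*k)) * ((pk k)⁻¹ * pk (k+1)) by ring,
            h2, ← map_mul, ← pow_succ', ← pow_add]
          rw [show t + t*k = t*(k+1) by ring, mul_assoc]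
        rw [e1, e2]
        rw [show (t+1)*(k+1) = t*(k+1) + (k+1) by ring, pow_add]
        ring

/-- partial sum -/
noncomputable def gP (c : ℂ) (t N : ℕ) : ps := ∑ k ∈ range N, gT c t k

lemma gP_rec (c : ℂ) (t N : ℕ) :
    gP c t (N+1) = gP c (t+1) (N+1) + (PowerSeries.C c * X ^ t) * gP c t N := by
  rw [gP, gP, gP, Finset.sum_range_succ', Finset.sum_range_succ', Finset.mul_sum]
  simp only [gT_rec c t]
  rw [Finset.sum_add_distrib, gT_zero, gT_zero]
  ring

noncomputable def gS (c : ℂ) (t : ℕ) : ps := mk fun d => coeff d (gP c t (d+1))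

lemma coeff_gP_stable (c : ℂ) {t : ℕ} (ht : 1 ≤ t) {i m n : ℕ} (him : i < m) (hmn : m ≤ n) :
    coeff i (gP c t n) = coeff i (gP c t m) := by
  rw [gP, gP, ← Finset.sum_range_add_sum_Ico _ hmn, map_add, map_sum, map_sum]
  have : ∀ k ∈ Finset.Ico m n, coeff i (gT c t k) = 0 := fun k hk => by
    have := (Finset.mem_Ico.1 hk).1
    exact coeff_gT_zero c (by calc i < m := him
                                _ ≤ k := this
                                _ ≤ t*k := Nat.le_mul_of_pos_left k (by omega))
  rw [Finset.sum_congr rfl this]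
  simp

lemma Cg_gS_gP (c : ℂ) {t : ℕ} (ht : 1 ≤ t) {d n : ℕ} (hn : d + 1 ≤ n) :
    Cg d (gS c t) (gP c t n) := by
  refine Cg.of fun i hi => ?_
  rw [gS, coeff_mk]
  exact (coeff_gP_stable c ht (Nat.lt_succ_self i) (by omega)).symm

lemma Cg_gS_one (c : ℂ) {d t : ℕ} (ht : d + 1 ≤ t) : Cg d (gS c t) 1 := by
  refine (Cg_gS_gP c (by omega) (n := d+1) le_rfl).trans (Cg.of fun i hi => ?_)
  rw [gP, Finset.sum_range_succ', gT_zero, map_add, map_sum]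
  have : ∀ k ∈ range d, coeff i (gT c t (k+1)) = 0 := fun k _ => by
    exact coeff_gT_zero c (by calc i ≤ d := hi
                                _ < t := by omega
                                _ ≤ t*(k+1) := Nat.le_mul_of_pos_right t (by omega))
  rw [Finset.sum_congr rfl this]
  simp

/-- functional equation for gS -/
lemma gS_step (c : ℂ) {t : ℕ} (ht : 1 ≤ t) :
    (1 - PowerSeries.C c * X ^ t) * gS c t = gS c (t+1) := by
  refine PowerSeries.ext fun d => ?_
  have h1 : Cg d ((1 - PowerSeries.C c * X ^ t) * gS c t)
      ((1 - PowerSeries.C c * X ^ t) * gP c t (d+1)) :=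
    (Cg.refl _).mul (Cg_gS_gP c ht le_rfl)
  rw [h1.coeff_eq le_rfl, gS, coeff_mk]
  have key : (1 - PowerSeries.C c * X ^ t) * gP c t (d+1)
      = gP c (t+1) (d+1) - (PowerSeries.C c * X ^ t) * gT c t d := by
    have hrec := gP_rec c t d
    have hsplit : gP c t (d+1) = gP c t d + gT c t d := by rw [gP, gP, Finset.sum_range_succ]
    calc (1 - PowerSeries.C c * X ^ t) * gP c t (d+1)
        = gP c t (d+1) - (PowerSeries.C c * X ^ t) * gP c t (d+1) := by ring
      _ = (gP c (t+1) (d+1) + (PowerSeries.C c * X ^ t) * gP c t d)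
          - (PowerSeries.C c * X ^ t) * (gP c t d + gT c t d) := by rw [← hrec, ← hsplit]
      _ = gP c (t+1) (d+1) - (PowerSeries.C c * X ^ t) * gT c t d := by ring
  rw [key, map_sub]
  have : coeff d ((PowerSeries.C c * X ^ t) * gT c t d) = 0 := by
    refine coeff_zero_of_X_pow_dvd (m := t + t*d) ?_ (by nlinarith)
    rw [pow_add]
    exact mul_dvd_mul (Dvd.dvd.mul_left dvd_rfl _) (X_pow_dvd_gT c t d)
  rw [this, sub_zero]

/-- Euler: gS * Pinf = 1 -/
lemma gS_mul_Pinf (c : ℂ) {t : ℕ} (ht : 1 ≤ t) : gS c t * Pinf c t = 1 := by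
  have step : ∀ s, gS c t * Pinf c t = gS c (t+s) * Pinf c (t+s) := by
    intro s
    induction s with
    | zero => rfl
    | succ s ih =>
      rw [ih, Pinf_step c (t := t+s) (by omega),
        show gS c (t+s) * ((1 - PowerSeries.C c * X ^ (t+s)) * Pinf c (t+s+1))
          = ((1 - PowerSeries.C c * X ^ (t+s)) * gS c (t+s)) * Pinf c (t+s+1) by ring,
        gS_step c (t := t+s) (by omega)]
      rw [show t+s+1 = t+(s+1) by omega]
  refine PowerSeries.ext fun d => ?_
  rw [step (d+1)]
  have h1 : Cg d (gS c (t+(d+1))) 1 := Cg_gS_one c (by omega)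
  have h2 : Cg d (Pinf c (t+(d+1))) 1 := Cg_Pinf_one c (by omega)
  have h3 := h1.mul h2
  rw [mul_one] at h3
  exact h3.coeff_eq le_rfl

lemma omega_pow_mod (n : ℕ) : ω ^ n = ω ^ (n % 3) := by
  conv_lhs => rw [← Nat.div_add_mod n 3, pow_add, pow_mul, hom3, one_pow, one_mul]

lemma omega_sq_pow (n : ℕ) : (ω^2) ^ n = (ω ^ n) ^ 2 := by
  rw [← pow_mul, ← pow_mul, Nat.mul_comm]

lemma sum_cube_roots (n : ℕ) :
    1 + ω ^ n + (ω^2) ^ n = if n % 3 = 0 then 3 else 0 := by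
  rw [omega_sq_pow, omega_pow_mod n]
  have h : n % 3 = 0 ∨ n % 3 = 1 ∨ n % 3 = 2 := by omega
  rcases h with h | h | h
  · rw [h]; norm_num
  · rw [h, if_neg (by omega), pow_one]; linear_combination hom
  · rw [h, if_neg (by omega)]; linear_combination hom + ω * hom3

lemma chi_eval (k : ℕ) :
    (chi ((k:ℤ)+1) : ℂ) = if k % 3 = 0 then 1 else if k % 3 = 1 then -1 else 0 := by
  have h : k % 3 = 0 ∨ k % 3 = 1 ∨ k % 3 = 2 := by omega
  rcases h with h | h | h
  · rw [chi, if_pos (by omega : ((k:ℤ)+1) % 3 = 1), if_pos h]; norm_num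
  · rw [chi, if_neg (by omega : ¬ ((k:ℤ)+1) % 3 = 1), if_pos (by omega : ((k:ℤ)+1) % 3 = 2),
      if_neg (by omega), if_pos (by omega)]; norm_num
  · rw [chi, if_neg (by omega : ¬ ((k:ℤ)+1) % 3 = 1), if_neg (by omega : ¬ ((k:ℤ)+1) % 3 = 2),
      if_neg (by omega), if_neg (by omega)]; norm_num

lemma chi_formula (k : ℕ) :
    3 * ((chi ((k:ℤ)+1) : ℂ)) = (1 - ω^2) * ω^k + (1 - ω) * (ω^2)^k := by
  rw [chi_eval, omega_sq_pow, omega_pow_mod k]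
  have h : k % 3 = 0 ∨ k % 3 = 1 ∨ k % 3 = 2 := by omega
  rcases h with h | h | h <;> rw [h] <;> norm_num
  · linear_combination hom
  · linear_combination (-1 : ℂ) * hom + 2 * hom3
  · linear_combination (ω^2) * hom3

lemma sum_range_triple {M : Type*} [AddCommMonoid M] (h : ℕ → M)
    (hz : ∀ n, n % 3 ≠ 0 → h n = 0) (N : ℕ) :
    ∑ n ∈ range (3*N), h n = ∑ m ∈ range N, h (3*m) := by
  induction N with
  | zero => simp
  | succ N ih =>
    rw [show 3*(N+1) = (3*N+1+1)+1 by ring, Finset.sum_range_succ, Finset.sum_range_succ,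
      Finset.sum_range_succ, hz (3*N+1) (by omega), hz (3*N+1+1) (by omega),
      add_zero, add_zero, ih, Finset.sum_range_succ]

/-- term (-1)^n c^n X^(e n + u n) / (q;q)_n -/
noncomputable def fT (c : ℂ) (u n : ℕ) : ps :=
  PowerSeries.C ((-1) ^ n * c ^ n) * (X ^ (e n + u*n) * (pk n)⁻¹)

lemma fT_zero (c : ℂ) (u : ℕ) : fT c u 0 = 1 := by
  simp [fT, e, pk, pp, one_inv_ps]

lemma X_pow_dvd_fT (c : ℂ) (u n : ℕ) : (X : ps) ^ (e n + u*n) ∣ fT c u n := by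
  unfold fT
  exact Dvd.dvd.mul_left (Dvd.dvd.mul_right dvd_rfl _) _

lemma coeff_fT_zero (c : ℂ) {u n d : ℕ} (h : d < e n + u*n) : coeff d (fT c u n) = 0 :=
  coeff_zero_of_X_pow_dvd (X_pow_dvd_fT c u n) h

lemma coeff_fT_zero' (c : ℂ) {u n d : ℕ} (h : d + 1 < n) : coeff d (fT c u n) = 0 := by
  refine coeff_fT_zero c ?_
  have := pred_le_e n
  omega

lemma fT_rec (c : ℂ) (u n : ℕ) :
    fT c u (n+1) = fT c (u+1) (n+1) - (PowerSeries.C c * X ^ u) * fT c (u+1) n := by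
  have hcan : ∀ f g : ps, f * pk (n+1) = g * pk (n+1) → f = g := fun f g h =>
    mul_right_cancel₀ (pk_ne_zero (n+1)) h
  apply hcan
  have h1 : (pk (n+1))⁻¹ * pk (n+1) = 1 := pk_inv_mul (n+1)
  have h2 : (pk n)⁻¹ * pk (n+1) = 1 - X ^ (n+1) := by
    rw [pk_succ, ← mul_assoc, pk_inv_mul, one_mul]
  have hE : e (n+1) + u*(n+1) = e n + (u+1)*n + u := by rw [e_succ]; ring
  have hE2 : e (n+1) + (u+1)*(n+1) = (e n + (u+1)*n + u) + (n+1) := by rw [e_succ]; ring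
  calc fT c u (n+1) * pk (n+1)
      = PowerSeries.C ((-1)^(n+1) * c^(n+1)) * X ^ (e (n+1) + u*(n+1))
          * ((pk (n+1))⁻¹ * pk (n+1)) := by unfold fT; ring
    _ = PowerSeries.C ((-1)^(n+1) * c^(n+1)) * X ^ (e n + (u+1)*n + u) := by
        rw [h1, mul_one, hE]
    _ = (fT c (u+1) (n+1) - (PowerSeries.C c * X ^ u) * fT c (u+1) n) * pk (n+1) := by
        rw [sub_mul]
        have e1 : fT c (u+1) (n+1) * pk (n+1)
            = PowerSeries.C ((-1)^(n+1) * c^(n+1)) * X ^ ((e n + (u+1)*n + u) + (n+1)) := by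
          unfold fT
          rw [show (PowerSeries.C ((-1)^(n+1) * c^(n+1)) * (X ^ (e (n+1) + (u+1)*(n+1)) * (pk (n+1))⁻¹)) * pk (n+1)
            = PowerSeries.C ((-1)^(n+1) * c^(n+1)) * X ^ (e (n+1) + (u+1)*(n+1)) * ((pk (n+1))⁻¹ * pk (n+1)) by ring,
            h1, mul_one, hE2]
        have e2 : (PowerSeries.C c * X ^ u) * fT c (u+1) n * pk (n+1)
            = - (PowerSeries.C ((-1)^(n+1) * c^(n+1))
                * (X ^ (e n + (u+1)*n + u) * (1 - X ^ (n+1)))) := by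
          unfold fT
          rw [show PowerSeries.C c * X ^ u * (PowerSeries.C ((-1)^n * c^n) * (X ^ (e n + (u+1)*n) * (pk n)⁻¹)) * pk (n+1)
            = PowerSeries.C c * PowerSeries.C ((-1)^n * c^n) * (X ^ u * X ^ (e n + (u+1)*n)) * ((pk n)⁻¹ * pk (n+1)) by ring,
            h2, ← map_mul, ← pow_add]
          rw [show u + (e n + (u+1)*n) = e n + (u+1)*n + u by ring]
          rw [show c * ((-1)^n * c^n) = -((-1)^(n+1) * c^(n+1)) by ring, map_neg]
          ring
        rw [e1, e2, sub_neg_eq_add, pow_add]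
        ring

noncomputable def fP (c : ℂ) (u N : ℕ) : ps := ∑ n ∈ range N, fT c u n

lemma fP_rec (c : ℂ) (u N : ℕ) :
    fP c u (N+1) = fP c (u+1) (N+1) - (PowerSeries.C c * X ^ u) * fP c (u+1) N := by
  rw [fP, fP, fP, Finset.sum_range_succ', Finset.sum_range_succ', Finset.mul_sum]
  simp only [fT_rec c u]
  rw [Finset.sum_sub_distrib, fT_zero, fT_zero]
  ring

noncomputable def fS (c : ℂ) (u : ℕ) : ps := mk fun d => coeff d (fP c u (d+2))

lemma coeff_fP_stable (c : ℂ) (u : ℕ) {i m n : ℕ} (him : i + 2 ≤ m) (hmn : m ≤ n) :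
    coeff i (fP c u n) = coeff i (fP c u m) := by
  rw [fP, fP, ← Finset.sum_range_add_sum_Ico _ hmn, map_add, map_sum, map_sum]
  have : ∀ k ∈ Finset.Ico m n, coeff i (fT c u k) = 0 := fun k hk => by
    have := (Finset.mem_Ico.1 hk).1
    exact coeff_fT_zero' c (by omega)
  rw [Finset.sum_congr rfl this]
  simp

lemma Cg_fS_fP (c : ℂ) (u : ℕ) {d n : ℕ} (hn : d + 2 ≤ n) :
    Cg d (fS c u) (fP c u n) := by
  refine Cg.of fun i hi => ?_
  rw [fS, coeff_mk]
  exact (coeff_fP_stable c u (le_refl (i+2)) (by omega)).symm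

lemma Cg_fS_one (c : ℂ) {d u : ℕ} (hu : d + 1 ≤ u) : Cg d (fS c u) 1 := by
  refine (Cg_fS_fP c u (n := d+2) le_rfl).trans (Cg.of fun i hi => ?_)
  rw [fP, Finset.sum_range_succ', fT_zero, map_add, map_sum]
  have : ∀ k ∈ range (d+1), coeff i (fT c u (k+1)) = 0 := fun k _ => by
    refine coeff_fT_zero c ?_
    have : u ≤ u * (k+1) := Nat.le_mul_of_pos_right u (by omega)
    omega
  rw [Finset.sum_congr rfl this]
  simp

lemma fS_step (c : ℂ) (u : ℕ) :
    fS c u = (1 - PowerSeries.C c * X ^ u) * fS c (u+1) := by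
  refine PowerSeries.ext fun d => ?_
  have h1 : Cg d ((1 - PowerSeries.C c * X ^ u) * fS c (u+1))
      ((1 - PowerSeries.C c * X ^ u) * fP c (u+1) (d+2)) :=
    (Cg.refl _).mul (Cg_fS_fP c (u+1) le_rfl)
  rw [h1.coeff_eq le_rfl, fS, coeff_mk]
  have hsplit : fP c (u+1) (d+2) = fP c (u+1) (d+1) + fT c (u+1) (d+1) := by
    rw [fP, fP, Finset.sum_range_succ]
  have key : (1 - PowerSeries.C c * X ^ u) * fP c (u+1) (d+2)
      = fP c u (d+2) - (PowerSeries.C c * X ^ u) * fT c (u+1) (d+1) := by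
    have hrec := fP_rec c u (d+1)
    calc (1 - PowerSeries.C c * X ^ u) * fP c (u+1) (d+2)
        = fP c (u+1) (d+2) - (PowerSeries.C c * X ^ u) * (fP c (u+1) (d+1) + fT c (u+1) (d+1)) := by
          rw [← hsplit]; ring
      _ = (fP c (u+1) (d+2) - (PowerSeries.C c * X ^ u) * fP c (u+1) (d+1))
            - (PowerSeries.C c * X ^ u) * fT c (u+1) (d+1) := by ring
      _ = fP c u (d+2) - (PowerSeries.C c * X ^ u) * fT c (u+1) (d+1) := by rw [← hrec]
  rw [key, map_sub]
  have hb : coeff d ((PowerSeries.C c * X ^ u) * fT c (u+1) (d+1)) = 0 := by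
    have hdvd : (X : ps) ^ (e (d+1) + (u+1)*(d+1)) ∣ (PowerSeries.C c * X ^ u) * fT c (u+1) (d+1) :=
      Dvd.dvd.mul_left (X_pow_dvd_fT c (u+1) (d+1)) _
    refine coeff_zero_of_X_pow_dvd hdvd ?_
    have : d + 1 ≤ (u+1)*(d+1) := Nat.le_mul_of_pos_left (d+1) (by omega)
    omega
  rw [hb, sub_zero]

lemma fS_telescope (c : ℂ) (u s : ℕ) :
    fS c u = pp c u s * fS c (u+s) := by
  induction s with
  | zero => simp [pp]
  | succ s ih =>
    rw [ih, fS_step c (u+s), pp_succ, mul_assoc, ← add_assoc]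

lemma fS_eq_Pinf (c : ℂ) : fS c 1 = Pinf c 1 := by
  refine PowerSeries.ext fun d => ?_
  have h1 : Cg d (fS c 1) (pp c 1 (d+1) * fS c (1+(d+1))) := by
    rw [← fS_telescope]; exact Cg.refl _
  have h2 : Cg d (pp c 1 (d+1) * fS c (1+(d+1))) (pp c 1 (d+1) * 1) :=
    (Cg.refl _).mul (Cg_fS_one c (by omega))
  have h3 : Cg d (Pinf c 1) (pp c 1 (d+1) * 1) := by
    rw [mul_one]; exact Cg_Pinf_pp c le_rfl le_rfl
  exact ((h1.trans h2).trans h3.symm).coeff_eq le_rfl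

lemma fS_zero (c : ℂ) : fS c 0 = (1 - PowerSeries.C c) * Pinf c 1 := by
  have := fS_step c 0
  rw [pow_zero, mul_one, fS_eq_Pinf] at this
  exact this

noncomputable def Tn (n : ℕ) : ps := X ^ (e n) * (pk n)⁻¹

lemma coeff_Tn_zero {d n : ℕ} (h : d + 1 < n) : coeff d (Tn n) = 0 := by
  refine coeff_zero_of_X_pow_dvd (m := e n) (Dvd.dvd.mul_right dvd_rfl _) ?_
  have := pred_le_e n
  omega

lemma coeff_fT0 (c : ℂ) (n d : ℕ) :
    coeff d (fT c 0 n) = (-1:ℂ)^n * c^n * coeff d (Tn n) := by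
  rw [fT, Nat.zero_mul, Nat.add_zero, coeff_C_mul, Tn]

noncomputable def LC : ps := mk fun d => coeff d
  (∑ m ∈ range (d+1), ((-1:ℂ)^m) • ((X : ps) ^ (3*m*(3*m-1)/2) * (pk (3*m))⁻¹))

noncomputable def RC : ps := mk fun d => coeff d
  (∑ k ∈ range (d+1), ((chi ((k:ℤ)+1) : ℂ)) • ((X : ps) ^ k * (pk k)⁻¹))

noncomputable def Pi3C : ps := mk fun d => coeff d
  (∏ i ∈ range (d+1), (1 - (X : ps) ^ (3*(i+1))))

lemma coeff_LC (d : ℕ) :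
    coeff d LC = ∑ m ∈ range (d+1), (-1:ℂ)^m * coeff d (Tn (3*m)) := by
  rw [LC, coeff_mk, map_sum]
  refine Finset.sum_congr rfl fun m _ => ?_
  rw [PowerSeries.coeff_smul, smul_eq_mul, Tn, ← e_eq]

lemma LC3 : PowerSeries.C (3:ℂ) * LC = fS 1 0 + fS ω 0 + fS (ω^2) 0 := by
  refine PowerSeries.ext fun d => ?_
  have hsum : ∀ c : ℂ, coeff d (fS c 0) = ∑ n ∈ range (d+2), (-1:ℂ)^n * c^n * coeff d (Tn n) := by
    intro c
    rw [fS, coeff_mk, fP, map_sum]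
    exact Finset.sum_congr rfl fun n _ => coeff_fT0 c n d
  set h : ℕ → ℂ := fun n => (-1:ℂ)^n * (1 + ω^n + (ω^2)^n) * coeff d (Tn n) with hh
  have hz : ∀ n, n % 3 ≠ 0 → h n = 0 := fun n hn => by
    rw [hh]; simp only
    rw [sum_cube_roots, if_neg hn, mul_zero, zero_mul]
  have hbig : ∀ n, d+2 ≤ n → h n = 0 := fun n hn => by
    rw [hh]; simp only
    rw [coeff_Tn_zero (by omega), mul_zero]
  have hrhs : coeff d (fS 1 0 + fS ω 0 + fS (ω^2) 0) = ∑ n ∈ range (d+2), h n := by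
    rw [map_add, map_add, hsum 1, hsum ω, hsum (ω^2), ← Finset.sum_add_distrib,
      ← Finset.sum_add_distrib]
    refine Finset.sum_congr rfl fun n _ => ?_
    rw [hh]; simp only
    rw [one_pow]; ring
  rw [hrhs, Finset.sum_subset (Finset.range_subset_range.2 (show d+2 ≤ 3*(d+1) by omega))
    (fun x _ hx => hbig x (by simpa using hx)), sum_range_triple h hz (d+1),
    coeff_C_mul, coeff_LC, Finset.mul_sum]
  refine Finset.sum_congr rfl fun m _ => ?_
  rw [hh]; simp only
  rw [sum_cube_roots, if_pos (by omega : (3*m) % 3 = 0), pow_mul]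
  norm_num
  ring

lemma coeff_gS1 (c : ℂ) (d : ℕ) :
    coeff d (gS c 1) = ∑ k ∈ range (d+1), c^k * coeff d ((X:ps)^k * (pk k)⁻¹) := by
  rw [gS, coeff_mk, gP, map_sum]
  refine Finset.sum_congr rfl fun k _ => ?_
  rw [gT, Nat.one_mul, coeff_C_mul]

lemma RC3 : PowerSeries.C (3:ℂ) * RC
    = (1 - PowerSeries.C (ω^2)) * gS ω 1 + (1 - PowerSeries.C ω) * gS (ω^2) 1 := by
  refine PowerSeries.ext fun d => ?_
  have hL : coeff d (PowerSeries.C (3:ℂ) * RC)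
      = ∑ k ∈ range (d+1), 3 * ((chi ((k:ℤ)+1) : ℂ) * coeff d ((X:ps)^k * (pk k)⁻¹)) := by
    rw [coeff_C_mul, RC, coeff_mk, map_sum, Finset.mul_sum]
    refine Finset.sum_congr rfl fun k _ => ?_
    rw [PowerSeries.coeff_smul, smul_eq_mul]
  have hR : ∀ a c : ℂ, coeff d ((1 - PowerSeries.C a) * gS c 1)
      = ∑ k ∈ range (d+1), (1 - a) * (c^k * coeff d ((X:ps)^k * (pk k)⁻¹)) := by
    intro a c
    rw [sub_mul, one_mul, map_sub, coeff_C_mul, coeff_gS1, Finset.mul_sum,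
      ← Finset.sum_sub_distrib]
    refine Finset.sum_congr rfl fun k _ => by ring
  rw [map_add, hL, hR, hR, ← Finset.sum_add_distrib]
  refine Finset.sum_congr rfl fun k _ => ?_
  linear_combination (coeff d ((X:ps)^k * (pk k)⁻¹)) * chi_formula k

lemma pp_triple (n : ℕ) :
    pk n * pp ω 1 n * pp (ω^2) 1 n = ∏ i ∈ range n, (1 - (X : ps) ^ (3*(i+1))) := by
  have hs : (PowerSeries.C ω)^2 + PowerSeries.C ω + 1 = 0 := by
    have := congrArg (PowerSeries.C (R := ℂ)) hom
    rw [map_add, map_add, map_pow, map_one, map_zero] at this; exact this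
  have h3 : (PowerSeries.C ω)^3 = 1 := by
    have := congrArg (PowerSeries.C (R := ℂ)) hom3
    rw [map_pow, map_one] at this; exact this
  rw [pk, pp, pp, pp, ← Finset.prod_mul_distrib, ← Finset.prod_mul_distrib]
  refine Finset.prod_congr rfl fun i _ => ?_
  rw [map_one, one_mul, map_pow, show 3*(i+1) = (1+i)*3 by ring, pow_mul]
  linear_combination (((X:ps)^(1+i))^2 - (X:ps)^(1+i)) * hs
    + (((X:ps)^(1+i))^2 - ((X:ps)^(1+i))^3) * h3

lemma Pi3C_eq : Pi3C = Pinf 1 1 * Pinf ω 1 * Pinf (ω^2) 1 := by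
  refine PowerSeries.ext fun d => ?_
  have h1 : Cg d (Pinf 1 1 * Pinf ω 1 * Pinf (ω^2) 1)
      (pp 1 1 (d+1) * pp ω 1 (d+1) * pp (ω^2) 1 (d+1)) :=
    ((Cg_Pinf_pp 1 le_rfl le_rfl).mul (Cg_Pinf_pp ω le_rfl le_rfl)).mul
      (Cg_Pinf_pp (ω^2) le_rfl le_rfl)
  rw [h1.coeff_eq le_rfl, Pi3C, coeff_mk]
  rw [show pp 1 1 (d+1) = pk (d+1) from rfl, pp_triple]

lemma Pinf_one_eq_pk_lim : Pinf 1 1 = mk fun d => coeff d (pk (d+1)) := rfl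

theorem mainC : Pinf 1 1 * Pi3C⁻¹ * LC = RC := by
  set A := Pinf 1 1 with hA
  set B := Pinf ω 1 with hB
  set B2 := Pinf (ω^2) 1 with hB2
  have hccA : constantCoeff A = 1 := constantCoeff_Pinf 1 le_rfl
  have hccB : constantCoeff B = 1 := constantCoeff_Pinf ω le_rfl
  have hccB2 : constantCoeff B2 = 1 := constantCoeff_Pinf (ω^2) le_rfl
  have hccP : constantCoeff Pi3C = 1 := by
    rw [Pi3C_eq, map_mul, map_mul, hccA, hccB, hccB2]; norm_num
  have hPne : Pi3C ≠ 0 := fun h => by rw [h, map_zero] at hccP; exact one_ne_zero hccP.symm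
  have h3ne : (PowerSeries.C (3:ℂ)) ≠ 0 := fun h => by
    have := congrArg (constantCoeff (R := ℂ)) h
    rw [constantCoeff_C, map_zero] at this
    norm_num at this
  have hgB : gS ω 1 * B = 1 := gS_mul_Pinf ω le_rfl
  have hgB2 : gS (ω^2) 1 * B2 = 1 := gS_mul_Pinf (ω^2) le_rfl
  have hLC : PowerSeries.C (3:ℂ) * LC = (1 - PowerSeries.C ω) * B + (1 - PowerSeries.C (ω^2)) * B2 := by
    rw [LC3, fS_zero, fS_zero, fS_zero, map_one, sub_self, zero_mul, zero_add]
  have key9 : PowerSeries.C (3:ℂ) * (PowerSeries.C (3:ℂ) * (A * LC))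
      = PowerSeries.C (3:ℂ) * (PowerSeries.C (3:ℂ) * (RC * Pi3C)) := by
    calc PowerSeries.C (3:ℂ) * (PowerSeries.C (3:ℂ) * (A * LC))
        = A * (PowerSeries.C (3:ℂ) * LC) * PowerSeries.C (3:ℂ) := by ring
      _ = A * ((1 - PowerSeries.C ω) * B + (1 - PowerSeries.C (ω^2)) * B2) * PowerSeries.C (3:ℂ) := by
          rw [hLC]
      _ = ((1 - PowerSeries.C (ω^2)) * (gS ω 1 * B) * A * B2
            + (1 - PowerSeries.C ω) * (gS (ω^2) 1 * B2) * A * B) * PowerSeries.C (3:ℂ) := by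
          rw [hgB, hgB2]; ring
      _ = ((1 - PowerSeries.C (ω^2)) * gS ω 1 + (1 - PowerSeries.C ω) * gS (ω^2) 1)
            * (A * B * B2) * PowerSeries.C (3:ℂ) := by ring
      _ = (PowerSeries.C (3:ℂ) * RC) * (A * B * B2) * PowerSeries.C (3:ℂ) := by rw [RC3]
      _ = PowerSeries.C (3:ℂ) * (PowerSeries.C (3:ℂ) * (RC * Pi3C)) := by rw [Pi3C_eq]; ring
  have key : A * LC = RC * Pi3C := mul_left_cancel₀ h3ne (mul_left_cancel₀ h3ne key9)
  calc A * Pi3C⁻¹ * LC = (A * LC) * Pi3C⁻¹ := by ring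
    _ = (RC * Pi3C) * Pi3C⁻¹ := by rw [key]
    _ = RC * (Pi3C * Pi3C⁻¹) := by ring
    _ = RC := by rw [PowerSeries.mul_inv_cancel _ (by rw [hccP]; exact one_ne_zero), mul_one]

noncomputable def φ : PowerSeries ℚ →+* ps := PowerSeries.map (algebraMap ℚ ℂ)

lemma φ_coeff (f : PowerSeries ℚ) (d : ℕ) :
    coeff d (φ f) = algebraMap ℚ ℂ (coeff d f) := by
  unfold φ
  rw [PowerSeries.coeff_map]

lemma φ_X : φ (X : PowerSeries ℚ) = X := by
  unfold φ
  rw [PowerSeries.map_X]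

lemma φ_inj : Function.Injective φ := fun f g h => PowerSeries.ext fun d => by
  have h2 := congrArg (coeff d) h
  rw [φ_coeff, φ_coeff] at h2
  exact (algebraMap ℚ ℂ).injective h2

lemma constantCoeff_pochP {M : ℕ} (hM : 1 ≤ M) (n : ℕ) :
    constantCoeff (pochP M n) = 1 := by
  rw [pochP, map_prod]
  refine Finset.prod_eq_one fun i _ => ?_
  have : constantCoeff ((X : PowerSeries ℚ) ^ (M*(i+1))) = 0 := by
    rw [map_pow, PowerSeries.constantCoeff_X, zero_pow (by positivity)]
  simp [this]

lemma pochP_const_ne {M : ℕ} (hM : 1 ≤ M) (n : ℕ) : constantCoeff (pochP M n) ≠ 0 := by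
  rw [constantCoeff_pochP hM]; exact one_ne_zero

lemma φ_inv (f : PowerSeries ℚ) (hf : constantCoeff f ≠ 0) : φ f⁻¹ = (φ f)⁻¹ := by
  have hc : constantCoeff (φ f) ≠ 0 := by
    rw [← coeff_zero_eq_constantCoeff_apply, φ_coeff, coeff_zero_eq_constantCoeff_apply]
    exact fun h => hf ((algebraMap ℚ ℂ).injective (by rw [h, map_zero]))
  have h1 := congrArg φ (PowerSeries.mul_inv_cancel f hf)
  rw [map_mul, map_one] at h1
  calc φ f⁻¹ = ((φ f)⁻¹ * φ f) * φ f⁻¹ := by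
        rw [PowerSeries.inv_mul_cancel _ hc, one_mul]
    _ = (φ f)⁻¹ * (φ f * φ f⁻¹) := by ring
    _ = (φ f)⁻¹ := by rw [h1, mul_one]

lemma φ_pochP_one (n : ℕ) : φ (pochP 1 n) = pk n := by
  rw [pochP, pk, pp, map_prod]
  refine Finset.prod_congr rfl fun i _ => ?_
  rw [map_sub, map_one, map_pow, φ_X, map_one, one_mul, one_mul, Nat.add_comm 1 i]

lemma φ_pochP_three (n : ℕ) :
    φ (pochP 3 n) = ∏ i ∈ range n, (1 - (X : ps) ^ (3*(i+1))) := by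
  rw [pochP, map_prod]
  refine Finset.prod_congr rfl fun i _ => ?_
  rw [map_sub, map_one, map_pow, φ_X]

lemma φ_pochInf_one : φ (pochInf 1) = Pinf 1 1 := by
  refine PowerSeries.ext fun d => ?_
  rw [φ_coeff, pochInf, coeff_mk, Pinf, coeff_mk,
    show pp 1 1 (d+1) = pk (d+1) from rfl, ← φ_pochP_one, φ_coeff]

lemma φ_pochInf_three : φ (pochInf 3) = Pi3C := by
  refine PowerSeries.ext fun d => ?_
  rw [φ_coeff, pochInf, coeff_mk, Pi3C, coeff_mk, ← φ_pochP_three, φ_coeff]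

lemma φ_smul (a : ℚ) (f : PowerSeries ℚ) : φ (a • f) = algebraMap ℚ ℂ a • φ f := by
  refine PowerSeries.ext fun d => ?_
  rw [φ_coeff, PowerSeries.coeff_smul, PowerSeries.coeff_smul, smul_eq_mul, smul_eq_mul,
    map_mul, φ_coeff]

lemma φ_L : φ (PowerSeries.mk fun d => coeff d
      (∑ m ∈ range (d + 1),
        ((-1 : ℚ) ^ m) • ((X : PowerSeries ℚ) ^ (3 * m * (3 * m - 1) / 2)
          * (pochP 1 (3 * m))⁻¹))) = LC := by
  refine PowerSeries.ext fun d => ?_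
  have key : φ (∑ m ∈ range (d + 1),
      ((-1 : ℚ) ^ m) • ((X : PowerSeries ℚ) ^ (3 * m * (3 * m - 1) / 2) * (pochP 1 (3 * m))⁻¹))
      = ∑ m ∈ range (d+1), ((-1:ℂ)^m) • ((X : ps) ^ (3*m*(3*m-1)/2) * (pk (3*m))⁻¹) := by
    rw [map_sum]
    refine Finset.sum_congr rfl fun m _ => ?_
    rw [φ_smul, map_mul, map_pow, map_pow, φ_X, φ_inv _ (pochP_const_ne le_rfl _),
      φ_pochP_one, map_neg, map_one]
  rw [φ_coeff, coeff_mk, LC, coeff_mk, ← key, φ_coeff]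

lemma φ_R : φ (PowerSeries.mk fun d => coeff d
      (∑ k ∈ range (d + 1),
        ((chi ((k : ℤ) + 1) : ℚ)) • ((X : PowerSeries ℚ) ^ k * (pochP 1 k)⁻¹))) = RC := by
  refine PowerSeries.ext fun d => ?_
  have key : φ (∑ k ∈ range (d + 1),
      ((chi ((k : ℤ) + 1) : ℚ)) • ((X : PowerSeries ℚ) ^ k * (pochP 1 k)⁻¹))
      = ∑ k ∈ range (d+1), ((chi ((k:ℤ)+1) : ℂ)) • ((X : ps) ^ k * (pk k)⁻¹) := by
    rw [map_sum]
    refine Finset.sum_congr rfl fun k _ => ?_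
    rw [φ_smul, map_mul, map_pow, φ_X, φ_inv _ (pochP_const_ne le_rfl _),
      φ_pochP_one, map_intCast]
  rw [φ_coeff, coeff_mk, RC, coeff_mk, ← key, φ_coeff]

lemma pochInf3_const_ne : constantCoeff (pochInf 3) ≠ 0 := by
  rw [← coeff_zero_eq_constantCoeff_apply, pochInf, coeff_mk,
    coeff_zero_eq_constantCoeff_apply, constantCoeff_pochP (by omega)]
  exact one_ne_zero

end QAux

theorem stmt14 :
    pochInf 1 * (pochInf 3)⁻¹ *
        (PowerSeries.mk fun d => coeff d
          (∑ m ∈ range (d + 1),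
            ((-1 : ℚ) ^ m) • ((X : PowerSeries ℚ) ^ (3 * m * (3 * m - 1) / 2)
              * (pochP 1 (3 * m))⁻¹)))
      = PowerSeries.mk fun d => coeff d
          (∑ k ∈ range (d + 1),
            ((chi ((k : ℤ) + 1) : ℚ)) • ((X : PowerSeries ℚ) ^ k * (pochP 1 k)⁻¹)) := by
  apply QAux.φ_inj
  rw [map_mul, map_mul, QAux.φ_pochInf_one, QAux.φ_inv _ QAux.pochInf3_const_ne,
    QAux.φ_pochInf_three, QAux.φ_L, QAux.φ_R]
  exact QAux.mainC
end
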